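/- arXiv:math/0401311 — 8 statements merged into one kernel-verified Lean document; each statement's English description precedes it below -/
import Mathlib

section
/- Every good set is a linearly independent family of 2k vectors, hence a basis of ℝ^{2k}. In particular Δ₁ = convexHull(A ∪ B) and Δ₂ = convexHull(B ∪ C) are (2k−1)-dimensional simplices (their vertex sets are affinely independent). -/
noncomputable section

/-- The ambient space `ℝ^{2k}`, written as pairs `(x, y)` with `x, y ∈ ℝ^k`. -/
abbrev V (k : ℕ) := (Fin k ⊕ Fin k) → ℝ

/-- `A_j = (e_j, 0)`. -/
def vA (k : ℕ) (j : Fin k) : V k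
  | .inl i => if i = j then 1 else 0
  | .inr _ => 0

/-- `B_j = (1/(2n)) · (2·𝟙 − e_j, 2·𝟙 − e_j)` with `n = 2k − 1`. -/
def vB (k : ℕ) (j : Fin k) : V k
  | .inl i => (2 - if i = j then 1 else 0) / (2 * (2 * (k : ℝ) - 1))
  | .inr i => (2 - if i = j then 1 else 0) / (2 * (2 * (k : ℝ) - 1))

/-- `C_j = (0, e_j)`. -/
def vC (k : ℕ) (j : Fin k) : V k
  | .inl _ => 0
  | .inr i => if i = j then 1 else 0

def setA (k : ℕ) : Set (V k) := Set.range (vA k)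
def setB (k : ℕ) : Set (V k) := Set.range (vB k)
def setC (k : ℕ) : Set (V k) := Set.range (vC k)
def setX (k : ℕ) : Set (V k) := setA k ∪ setB k ∪ setC k

/-- A subset `S ⊆ X` is good if it has exactly `2k` elements, contains no full
triple `{A_j, B_j, C_j}`, and `S ≠ A ∪ C`. -/
def IsGood (k : ℕ) (S : Set (V k)) : Prop :=
  S ⊆ setX k ∧ S.ncard = 2 * k ∧
  (∀ j : Fin k, ¬ (({vA k j, vB k j, vC k j} : Set (V k)) ⊆ S)) ∧
  S ≠ setA k ∪ setC k

def Delta0 (k : ℕ) : Set (V k) := convexHull ℝ (setA k ∪ setC k)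
def Delta1 (k : ℕ) : Set (V k) := convexHull ℝ (setA k ∪ setB k)
def Delta2 (k : ℕ) : Set (V k) := convexHull ℝ (setB k ∪ setC k)

/-- The modular block `Ω = closure(Δ₀ \ (Δ₁ ∪ Δ₂))`. -/
def OmegaB (k : ℕ) : Set (V k) := closure (Delta0 k \ (Delta1 k ∪ Delta2 k))

/-!
Write a vanishing combination of points of `X` as `∑ aⱼ Aⱼ + ∑ bⱼ Bⱼ + ∑ dⱼ Cⱼ = 0` and put
`β = ∑ bⱼ`. The `x_i`- and `y_i`-coordinates give `aᵢ = dᵢ = (bᵢ - 2β) / 2n`. A column missing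
`Aᵢ` or `Cᵢ` therefore has `bᵢ = 2β`, and one missing `Bᵢ` has `bᵢ = 0`; summing, `β = 2mβ` for
an integer `m`, so `β = 0` and all coefficients vanish. Hence every subset of `X` without a full
triple is linearly independent, and a good set, having `2k` elements, is a basis.
-/

theorem LinearIndepOn.span_eq_top_of_ncard_eq_finrank {K W : Type*} [DivisionRing K]
    [AddCommGroup W] [Module K W] [FiniteDimensional K W] {s : Set W}
    (hs : LinearIndepOn K id s) (hcard : s.ncard = Module.finrank K W) :
    Submodule.span K s = ⊤ := by
  have := hs.finite_of_isNoetherian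
  have := Fintype.ofFinite s
  simpa using hs.span_eq_top_of_card_eq_finrank'
    (by rwa [← Nat.card_eq_fintype_card, Nat.card_coe_set_eq])

namespace GoodSet

def vX (k : ℕ) : Fin k ⊕ Fin k ⊕ Fin k → V k :=
  Sum.elim (vA k) (Sum.elim (vB k) (vC k))

lemma range_vX (k : ℕ) : Set.range (vX k) = setX k := by
  simp only [vX, Set.Sum.elim_range, setX, setA, setB, setC, Set.union_assoc]

lemma two_mul_two_mul_sub_one_ne_zero (k : ℕ) : 2 * (2 * (k : ℝ) - 1) ≠ 0 :=
  mul_ne_zero two_ne_zero (sub_ne_zero.2 (by exact_mod_cast (show 2 * k ≠ 1 by omega)))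

lemma sum_mul_two_sub_ite {k : ℕ} (b : Fin k → ℝ) (N : ℝ) (i : Fin k) :
    ∑ j, b j * ((2 - if i = j then 1 else 0) / N) = (2 * ∑ j, b j - b i) / N := by
  simp_rw [mul_div_assoc', ← Finset.sum_div, mul_sub, mul_ite, mul_one, mul_zero,
    Finset.sum_sub_distrib, Finset.sum_ite_eq, Finset.mem_univ, if_true, Finset.mul_sum, mul_comm]

lemma combination_apply_inl {k : ℕ} (a b d : Fin k → ℝ) (i : Fin k) :
    (∑ j, a j • vA k j + ∑ j, b j • vB k j + ∑ j, d j • vC k j) (.inl i) =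
      a i + (2 * ∑ j, b j - b i) / (2 * (2 * (k : ℝ) - 1)) := by
  simp [Finset.sum_apply, vA, vB, vC, sum_mul_two_sub_ite]

lemma combination_apply_inr {k : ℕ} (a b d : Fin k → ℝ) (i : Fin k) :
    (∑ j, a j • vA k j + ∑ j, b j • vB k j + ∑ j, d j • vC k j) (.inr i) =
      d i + (2 * ∑ j, b j - b i) / (2 * (2 * (k : ℝ) - 1)) := by
  simp [Finset.sum_apply, vA, vB, vC, sum_mul_two_sub_ite, add_comm]

lemma sum_eq_zero_of_forall_eq_zero_or_eq_two_mul {ι : Type*} [Fintype ι] {b : ι → ℝ}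
    (hb : ∀ i, b i = 0 ∨ b i = 2 * ∑ j, b j) : ∑ j, b j = 0 := by
  classical
  set m := (Finset.univ.filter fun j => b j ≠ 0).card
  have hsum : ∑ j, b j = m * (2 * ∑ j, b j) := by
    nth_rewrite 1 [← Finset.sum_filter_ne_zero]
    rw [Finset.sum_congr rfl fun j hj =>
      (hb j).resolve_left (Finset.mem_filter.1 hj).2, Finset.sum_const, nsmul_eq_mul]
  have hm : (2 * m : ℝ) - 1 ≠ 0 :=
    sub_ne_zero.2 (by exact_mod_cast (show 2 * m ≠ 1 by omega))
  have : (∑ j, b j) * (2 * m - 1) = 0 := by linear_combination -hsum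
  exact (mul_eq_zero.1 this).resolve_right hm

theorem coeffs_eq_zero_of_combination_eq_zero {k : ℕ} {a b d : Fin k → ℝ}
    (hmiss : ∀ j, a j = 0 ∨ b j = 0 ∨ d j = 0)
    (h : ∑ j, a j • vA k j + ∑ j, b j • vB k j + ∑ j, d j • vC k j = 0) :
    a = 0 ∧ b = 0 ∧ d = 0 := by
  set N : ℝ := 2 * (2 * (k : ℝ) - 1)
  have hN : N ≠ 0 := two_mul_two_mul_sub_one_ne_zero k
  have ha i : a i = (b i - 2 * ∑ j, b j) / N := by
    have := combination_apply_inl a b d i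
    rw [h, Pi.zero_apply] at this
    rw [← neg_sub, neg_div]
    linarith
  have hd i : d i = (b i - 2 * ∑ j, b j) / N := by
    have := combination_apply_inr a b d i
    rw [h, Pi.zero_apply] at this
    rw [← neg_sub, neg_div]
    linarith
  have hb i : b i = 0 ∨ b i = 2 * ∑ j, b j := by
    rcases hmiss i with hai | hbi | hdi
    · rw [ha, div_eq_zero_iff, sub_eq_zero] at hai
      exact .inr (hai.resolve_right hN)
    · exact .inl hbi
    · rw [hd, div_eq_zero_iff, sub_eq_zero] at hdi
      exact .inr (hdi.resolve_right hN)
  have hβ := sum_eq_zero_of_forall_eq_zero_or_eq_two_mul hb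
  have hb0 : b = 0 := funext fun i => by simpa [hβ] using hb i
  refine ⟨funext fun i => ?_, hb0, funext fun i => ?_⟩
  · simp [ha, hb0]
  · simp [hd, hb0]

theorem linearIndepOn_vX {k : ℕ} {T : Set (Fin k ⊕ Fin k ⊕ Fin k)}
    (hT : ∀ j, .inl j ∉ T ∨ .inr (.inl j) ∉ T ∨ .inr (.inr j) ∉ T) :
    LinearIndepOn ℝ (vX k) T := by
  rw [linearIndepOn_iff]
  intro l hl hzero
  have hvanish : ∀ i ∉ T, l i = 0 := fun i hi =>
    Finsupp.notMem_support_iff.1 fun h => hi (hl h)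
  rw [Finsupp.linearCombination_apply, Finsupp.sum_fintype _ _ (by simp)] at hzero
  simp only [Fintype.sum_sum_type, vX, Sum.elim_inl, Sum.elim_inr, ← add_assoc] at hzero
  obtain ⟨ha, hb, hd⟩ := coeffs_eq_zero_of_combination_eq_zero
    (fun j => (hT j).imp (hvanish _) (Or.imp (hvanish _) (hvanish _))) hzero
  ext (j | j | j)
  exacts [congrFun ha j, congrFun hb j, congrFun hd j]

theorem linearIndepOn_id_of_subset_setX {k : ℕ} {S : Set (V k)} (hS : S ⊆ setX k)
    (htriple : ∀ j, ¬ ({vA k j, vB k j, vC k j} : Set (V k)) ⊆ S) :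
    LinearIndepOn ℝ id S := by
  have hS' : vX k '' (vX k ⁻¹' S) = S := Set.image_preimage_eq_of_subset (by rwa [range_vX])
  rw [← hS']
  refine (linearIndepOn_vX fun j => ?_).id_image
  by_contra! h
  exact htriple j (by simpa [Set.insert_subset_iff, vX] using h)

theorem linearIndepOn_id_setA_union_setB (k : ℕ) : LinearIndepOn ℝ id (setA k ∪ setB k) := by
  have : setA k ∪ setB k = vX k '' (Set.range .inl ∪ Set.range (.inr ∘ .inl)) := by
    simp only [Set.image_union, ← Set.range_comp, vX, setA, setB]
    rfl
  rw [this]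
  exact (linearIndepOn_vX fun j => .inr (.inr (by simp))).id_image

theorem linearIndepOn_id_setB_union_setC (k : ℕ) : LinearIndepOn ℝ id (setB k ∪ setC k) := by
  have : setB k ∪ setC k = vX k '' Set.range .inr := by
    simp only [← Set.range_comp, vX, Sum.elim_comp_inr, Set.Sum.elim_range, setB, setC]
  rw [this]
  exact (linearIndepOn_vX fun j => .inl (by simp)).id_image

end GoodSet

open GoodSet in
theorem stmt_1_general (k : ℕ) :
    (∀ S : Set (V k), IsGood k S →
      LinearIndependent ℝ ((↑) : S → V k) ∧ Submodule.span ℝ S = ⊤) ∧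
    AffineIndependent ℝ ((↑) : (setA k ∪ setB k : Set (V k)) → V k) ∧
    AffineIndependent ℝ ((↑) : (setB k ∪ setC k : Set (V k)) → V k) := by
  refine ⟨fun S ⟨hX, hcard, htriple, _⟩ => ?_,
    (linearIndepOn_id_setA_union_setB k).affineIndependent,
    (linearIndepOn_id_setB_union_setC k).affineIndependent⟩
  have hli := linearIndepOn_id_of_subset_setX hX htriple
  refine ⟨hli, hli.span_eq_top_of_ncard_eq_finrank ?_⟩
  simp [hcard, two_mul]

/-- Every good set is a linearly independent family of `2k` vectors, hence a basis of
`ℝ^{2k}`.  In particular the vertex sets `A ∪ B` of `Δ₁` and `B ∪ C` of `Δ₂` are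
affinely independent, so `Δ₁` and `Δ₂` are `(2k−1)`-dimensional simplices. -/
theorem stmt_1 (k : ℕ) (hk : 2 ≤ k) :
    (∀ S : Set (V k), IsGood k S →
      LinearIndependent ℝ ((↑) : S → V k) ∧ Submodule.span ℝ S = ⊤) ∧
    AffineIndependent ℝ ((↑) : (setA k ∪ setB k : Set (V k)) → V k) ∧
    AffineIndependent ℝ ((↑) : (setB k ∪ setC k : Set (V k)) → V k) :=
  stmt_1_general k
end
end

section
/- convexHull(A ∪ B) ∩ convexHull(B ∪ C) = convexHull(B). Moreover every point of B lies in the intrinsic (relative) interior of Δ₀ = convexHull(A ∪ C), so the intrinsic boundaries of Δ₀ and Δ₁ meet exactly in convexHull(A), and the intrinsic boundaries of Δ₀ and Δ₂ meet exactly in convexHull(C). -/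
noncomputable section

/-!
The functional `level (x, y) = ∑ᵢ (xᵢ - yᵢ)` equals `1`, `0`, `-1` on `A`, `B`, `C`. Hence `Δ₁` lies
in `level ≥ 0` and `Δ₂` in `level ≤ 0`, and `Δ₁ ∩ Δ₂` is the face `level = 0` of `Δ₁`, namely
`⟨B⟩`. `Δ₀` is the standard simplex, and the points of `B` have positive coordinates summing to
`1`, so they are relative interior points of it. Consequently a relative boundary point of `Δ₀`
has a vanishing coordinate; that coordinate is nonnegative on `Δ₁` and positive on `B`, so it cuts
out of `Δ₁` a face of `⟨A⟩` (and of `Δ₂` a face of `⟨C⟩`). Conversely, `⟨A⟩` is where `level`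
attains its maximum on `Δ₀` and on `Δ₁` without being constant there, so it lies in both relative
boundaries; likewise `⟨C⟩` with `-level` on `Δ₀` and `Δ₂`.
-/

open Set Filter Topology

section General

variable {E : Type*} [AddCommGroup E] [Module ℝ E]

theorem map_le_of_mem_convexHull (φ : E →ₗ[ℝ] ℝ) {S : Set E} {c : ℝ} (hS : ∀ z ∈ S, φ z ≤ c)
    {p : E} (hp : p ∈ convexHull ℝ S) : φ p ≤ c :=
  convexHull_min hS (convex_halfSpace_le φ.isLinear c) hp

theorem le_map_of_mem_convexHull (φ : E →ₗ[ℝ] ℝ) {S : Set E} {c : ℝ} (hS : ∀ z ∈ S, c ≤ φ z)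
    {p : E} (hp : p ∈ convexHull ℝ S) : c ≤ φ p :=
  convexHull_min hS (convex_halfSpace_ge φ.isLinear c) hp

theorem mem_convexHull_sep_of_map_eq_zero (φ : E →ₗ[ℝ] ℝ) {S : Set E} (hS : ∀ z ∈ S, 0 ≤ φ z)
    {p : E} (hp : p ∈ convexHull ℝ S) (hφp : φ p = 0) :
    p ∈ convexHull ℝ {z ∈ S | φ z = 0} := by
  obtain ⟨ι, t, w, z, hw₀, hw₁, hz, rfl⟩ := (convexHull_eq S).subset hp
  have hterm : ∀ i ∈ t, w i * φ (z i) = 0 := by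
    refine (Finset.sum_eq_zero_iff_of_nonneg fun i hi ↦
      mul_nonneg (hw₀ i hi) (hS _ (hz i hi))).1 ?_
    rw [← hφp, Finset.centerMass_eq_of_sum_1 _ _ hw₁, map_sum]
    simp only [map_smul, smul_eq_mul]
  rw [← Finset.centerMass_filter_ne_zero]
  refine Finset.centerMass_mem_convexHull _ (fun i hi ↦ hw₀ i (Finset.mem_filter.1 hi).1)
    (by rw [Finset.sum_filter_ne_zero, hw₁]; exact one_pos) fun i hi ↦ ?_
  obtain ⟨hit, hwi⟩ := Finset.mem_filter.1 hi
  exact ⟨hz i hit, (mul_eq_zero.1 (hterm i hit)).resolve_left hwi⟩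

variable [TopologicalSpace E]

theorem mem_intrinsicInterior_of_isOpen {s U : Set E} (hU : IsOpen U) {p : E} (hpU : p ∈ U)
    (hp : p ∈ affineSpan ℝ s) (hUs : U ∩ affineSpan ℝ s ⊆ s) : p ∈ intrinsicInterior ℝ s :=
  ⟨⟨p, hp⟩, interior_maximal (fun (z : affineSpan ℝ s) hz ↦ hUs ⟨hz, z.2⟩)
    (hU.preimage continuous_subtype_val) hpU, rfl⟩

variable [IsTopologicalAddGroup E] [ContinuousSMul ℝ E]

theorem notMem_intrinsicInterior_of_add_smul_notMem {s : Set E} {p v : E}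
    (hv : v ∈ (affineSpan ℝ s).direction) (hout : ∀ t : ℝ, 0 < t → p + t • v ∉ s) :
    p ∉ intrinsicInterior ℝ s := by
  rintro ⟨q, hq, rfl⟩
  let f : ℝ → affineSpan ℝ s := fun t ↦
    ⟨t • v +ᵥ (q : E), AffineSubspace.vadd_mem_of_mem_direction (Submodule.smul_mem _ t hv) q.2⟩
  have hf : Continuous f := by fun_prop
  have hf0 : f 0 = q := by ext; simp [f]
  have hev : ∀ᶠ t in 𝓝[>] (0 : ℝ), f t ∈ interior ((↑) ⁻¹' s) :=
    nhdsWithin_le_nhds (hf.continuousAt.preimage_mem_nhds (hf0 ▸ isOpen_interior.mem_nhds hq))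
  obtain ⟨t, ht, htpos⟩ := (hev.and self_mem_nhdsWithin).exists
  exact hout t htpos (by simpa [f, add_comm] using interior_subset ht)

-- Moving on from `p` away from `b` takes `φ` above its maximum on `s`, so leaves `s` at once.
theorem mem_intrinsicFrontier_of_map_le (φ : E →ₗ[ℝ] ℝ) {s : Set E} {p b : E} (hp : p ∈ s)
    (hmax : ∀ z ∈ s, φ z ≤ φ p) (hb : b ∈ s) (hbp : φ b < φ p) : p ∈ intrinsicFrontier ℝ s := by
  rw [← intrinsicClosure_sdiff_intrinsicInterior]
  refine ⟨subset_intrinsicClosure hp, notMem_intrinsicInterior_of_add_smul_notMem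
    (direction_affineSpan ℝ s ▸ vsub_mem_vectorSpan ℝ hp hb) fun t ht hmem ↦ ?_⟩
  have := hmax _ hmem
  simp only [map_add, map_smul, vsub_eq_sub, map_sub, smul_eq_mul] at this
  nlinarith

theorem convexHull_subset_intrinsicFrontier_convexHull_union (φ : E →ₗ[ℝ] ℝ) {S T : Set E}
    {c : ℝ} (hS : ∀ z ∈ S, φ z = c) (hT : ∀ z ∈ T, φ z ≤ c) {b : E} (hb : b ∈ T)
    (hbc : φ b < c) : convexHull ℝ S ⊆ intrinsicFrontier ℝ (convexHull ℝ (S ∪ T)) := by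
  intro p hp
  have hφp : φ p = c := le_antisymm (map_le_of_mem_convexHull φ (fun z hz ↦ (hS z hz).le) hp)
    (le_map_of_mem_convexHull φ (fun z hz ↦ (hS z hz).ge) hp)
  refine mem_intrinsicFrontier_of_map_le φ (convexHull_mono subset_union_left hp)
    (fun z hz ↦ hφp ▸ map_le_of_mem_convexHull φ ?_ hz) (subset_convexHull ℝ _ (Or.inr hb))
    (hφp ▸ hbc)
  rintro z (hz | hz)
  exacts [(hS z hz).le, hT z hz]

end General

section StdSimplex

variable {ι : Type*} [Fintype ι]

theorem sum_eq_one_of_mem_affineSpan_stdSimplex {z : ι → ℝ}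
    (hz : z ∈ affineSpan ℝ (stdSimplex ℝ ι)) : ∑ i, z i = 1 := by
  let σ : (ι → ℝ) →ᵃ[ℝ] ℝ := (∑ i, LinearMap.proj i : (ι → ℝ) →ₗ[ℝ] ℝ).toAffineMap
  have hσ : ∀ y, σ y = ∑ i, y i := fun y ↦ by simp [σ]
  have hσz := AffineSubspace.mem_map_of_mem σ hz
  rw [AffineSubspace.map_span] at hσz
  have hsub : σ '' stdSimplex ℝ ι ⊆ {1} := by
    rintro _ ⟨y, hy, rfl⟩
    exact (hσ y).trans hy.2
  simpa [hσ] using affineSpan_mono ℝ hsub hσz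

theorem mem_intrinsicInterior_stdSimplex {x : ι → ℝ} (hpos : ∀ i, 0 < x i)
    (hsum : ∑ i, x i = 1) : x ∈ intrinsicInterior ℝ (stdSimplex ℝ ι) := by
  refine mem_intrinsicInterior_of_isOpen (U := {z : ι → ℝ | ∀ i, 0 < z i}) ?_ hpos
    (subset_affineSpan ℝ _ ⟨fun i ↦ (hpos i).le, hsum⟩)
    fun z ⟨hz, hzs⟩ ↦ ⟨fun i ↦ (hz i).le, sum_eq_one_of_mem_affineSpan_stdSimplex hzs⟩
  simp only [ofPred_forall]
  exact isOpen_iInter_of_finite fun i ↦ isOpen_lt continuous_const (continuous_apply i)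

theorem exists_eq_zero_of_mem_intrinsicFrontier_stdSimplex {x : ι → ℝ}
    (hx : x ∈ intrinsicFrontier ℝ (stdSimplex ℝ ι)) : ∃ i, x i = 0 := by
  have hxs := intrinsicFrontier_subset (isClosed_stdSimplex ℝ ι) hx
  rw [← intrinsicClosure_sdiff_intrinsicInterior] at hx
  by_contra! hne
  exact hx.2 (mem_intrinsicInterior_stdSimplex (fun i ↦ (hxs.1 i).lt_of_ne' (hne i)) hxs.2)

end StdSimplex

section Configuration

variable (k : ℕ)

theorem setA_union_setC :
    setA k ∪ setC k = range fun s t : Fin k ⊕ Fin k ↦ if s = t then (1 : ℝ) else 0 := by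
  rw [setA, setC, ← Set.Sum.elim_range]
  congr 1
  funext s t
  cases s <;> cases t <;> simp [vA, vC, eq_comm]

theorem Delta0_eq_stdSimplex : Delta0 k = stdSimplex ℝ (Fin k ⊕ Fin k) := by
  rw [Delta0, setA_union_setC, convexHull_basis_eq_stdSimplex]

theorem isClosed_Delta1 : IsClosed (Delta1 k) :=
  ((finite_range _).union (finite_range _)).isClosed_convexHull ℝ

theorem isClosed_Delta2 : IsClosed (Delta2 k) :=
  ((finite_range _).union (finite_range _)).isClosed_convexHull ℝ

def level : V k →ₗ[ℝ] ℝ :=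
  ∑ i : Fin k, (LinearMap.proj (R := ℝ) (φ := fun _ : Fin k ⊕ Fin k ↦ ℝ) (Sum.inl i) -
    LinearMap.proj (Sum.inr i))

variable {k}

theorem vB_pos (j : Fin k) (s : Fin k ⊕ Fin k) : 0 < vB k j s := by
  have hk : (1 : ℝ) ≤ k := by exact_mod_cast j.pos
  cases s <;> exact div_pos (by split_ifs <;> norm_num) (by linarith)

theorem sum_vB (j : Fin k) : ∑ s, vB k j s = 1 := by
  have hk : (1 : ℝ) ≤ k := by exact_mod_cast j.pos
  simp only [Fintype.sum_sum_type, vB, ← Finset.sum_div, Finset.sum_sub_distrib,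
    Finset.sum_ite_eq', Finset.mem_univ, if_true, Finset.sum_const, Finset.card_univ,
    Fintype.card_fin, nsmul_eq_mul]
  have hk' : 2 * (2 * (k : ℝ) - 1) ≠ 0 := by nlinarith
  rw [mul_comm (k : ℝ) 2, ← add_div, div_eq_one_iff_eq hk']
  ring

theorem level_apply (x : V k) : level k x = ∑ i, (x (Sum.inl i) - x (Sum.inr i)) := by
  simp [level]

theorem level_vA (j : Fin k) : level k (vA k j) = 1 := by simp [level_apply, vA]

theorem level_vB (j : Fin k) : level k (vB k j) = 0 := by simp [level_apply, vB]

theorem level_vC (j : Fin k) : level k (vC k j) = -1 := by simp [level_apply, vC]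

variable (k)

theorem setB_subset_intrinsicInterior_Delta0 : setB k ⊆ intrinsicInterior ℝ (Delta0 k) := by
  rintro _ ⟨j, rfl⟩
  rw [Delta0_eq_stdSimplex]
  exact mem_intrinsicInterior_stdSimplex (vB_pos j) (sum_vB j)

theorem Delta1_inter_Delta2 : Delta1 k ∩ Delta2 k = convexHull ℝ (setB k) := by
  refine subset_antisymm (fun p ⟨hp₁, hp₂⟩ ↦ ?_)
    (subset_inter (convexHull_mono subset_union_right) (convexHull_mono subset_union_left))
  have hAB : ∀ z ∈ setA k ∪ setB k, 0 ≤ level k z := by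
    rintro _ (⟨j, rfl⟩ | ⟨j, rfl⟩) <;> simp [level_vA, level_vB]
  have hBC : ∀ z ∈ setB k ∪ setC k, level k z ≤ 0 := by
    rintro _ (⟨j, rfl⟩ | ⟨j, rfl⟩) <;> simp [level_vB, level_vC]
  have hp : level k p = 0 := le_antisymm (map_le_of_mem_convexHull _ hBC hp₂)
    (le_map_of_mem_convexHull _ hAB hp₁)
  refine convexHull_mono ?_ (mem_convexHull_sep_of_map_eq_zero _ hAB hp₁ hp)
  rintro _ ⟨⟨j, rfl⟩ | hz, hz0⟩
  · simp [level_vA] at hz0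
  · exact hz

theorem intrinsicFrontier_Delta0_inter_convexHull_union_setB_subset {F : Set (V k)}
    (hF : F ⊆ Delta0 k) :
    intrinsicFrontier ℝ (Delta0 k) ∩ convexHull ℝ (F ∪ setB k) ⊆ convexHull ℝ F := by
  rintro p ⟨hp₀, hp⟩
  rw [Delta0_eq_stdSimplex] at hp₀ hF
  obtain ⟨s, hs⟩ := exists_eq_zero_of_mem_intrinsicFrontier_stdSimplex hp₀
  have hnonneg : ∀ z ∈ F ∪ setB k, 0 ≤ LinearMap.proj (R := ℝ) (φ := fun _ ↦ ℝ) s z := by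
    rintro z (hz | ⟨j, rfl⟩)
    exacts [(hF hz).1 s, (vB_pos j s).le]
  refine convexHull_mono ?_ (mem_convexHull_sep_of_map_eq_zero _ hnonneg hp hs)
  rintro z ⟨hz | ⟨j, rfl⟩, hz0⟩
  · exact hz
  · exact absurd hz0 (vB_pos j s).ne'

theorem convexHull_setA_subset :
    convexHull ℝ (setA k) ⊆ intrinsicFrontier ℝ (Delta0 k) ∩ intrinsicFrontier ℝ (Delta1 k) := by
  intro p hp
  obtain ⟨_, j, rfl⟩ := convexHull_nonempty_iff.1 ⟨p, hp⟩
  have hA : ∀ z ∈ setA k, level k z = 1 := by rintro _ ⟨i, rfl⟩; exact level_vA i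
  refine ⟨convexHull_subset_intrinsicFrontier_convexHull_union _ hA ?_ (mem_range_self j) ?_ hp,
    convexHull_subset_intrinsicFrontier_convexHull_union _ hA ?_ (mem_range_self j) ?_ hp⟩
  · rintro _ ⟨i, rfl⟩
    simp [level_vC]
  · simp [level_vC]
  · rintro _ ⟨i, rfl⟩
    simp [level_vB]
  · simp [level_vB]

theorem convexHull_setC_subset :
    convexHull ℝ (setC k) ⊆ intrinsicFrontier ℝ (Delta0 k) ∩ intrinsicFrontier ℝ (Delta2 k) := by
  intro p hp
  obtain ⟨_, j, rfl⟩ := convexHull_nonempty_iff.1 ⟨p, hp⟩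
  have hC : ∀ z ∈ setC k, (-level k) z = 1 := by rintro _ ⟨i, rfl⟩; simp [level_vC]
  rw [Delta0, union_comm (setA k), Delta2, union_comm (setB k)]
  refine ⟨convexHull_subset_intrinsicFrontier_convexHull_union _ hC ?_ (mem_range_self j) ?_ hp,
    convexHull_subset_intrinsicFrontier_convexHull_union _ hC ?_ (mem_range_self j) ?_ hp⟩
  · rintro _ ⟨i, rfl⟩
    simp [level_vA]
  · simp [level_vA]
  · rintro _ ⟨i, rfl⟩
    simp [level_vB]
  · simp [level_vB]

theorem intrinsicFrontier_Delta0_inter_intrinsicFrontier_Delta1 :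
    intrinsicFrontier ℝ (Delta0 k) ∩ intrinsicFrontier ℝ (Delta1 k) = convexHull ℝ (setA k) := by
  refine subset_antisymm ?_ (convexHull_setA_subset k)
  refine (inter_subset_inter_right _ (intrinsicFrontier_subset (isClosed_Delta1 k))).trans ?_
  exact intrinsicFrontier_Delta0_inter_convexHull_union_setB_subset k
    (subset_union_left.trans (subset_convexHull ℝ _))

theorem intrinsicFrontier_Delta0_inter_intrinsicFrontier_Delta2 :
    intrinsicFrontier ℝ (Delta0 k) ∩ intrinsicFrontier ℝ (Delta2 k) = convexHull ℝ (setC k) := by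
  refine subset_antisymm ?_ (convexHull_setC_subset k)
  refine (inter_subset_inter_right _ (intrinsicFrontier_subset (isClosed_Delta2 k))).trans ?_
  rw [Delta2, union_comm (setB k)]
  exact intrinsicFrontier_Delta0_inter_convexHull_union_setB_subset k
    (subset_union_right.trans (subset_convexHull ℝ _))

end Configuration

theorem stmt_5_general (k : ℕ) :
    Delta1 k ∩ Delta2 k = convexHull ℝ (setB k) ∧
    setB k ⊆ intrinsicInterior ℝ (Delta0 k) ∧
    intrinsicFrontier ℝ (Delta0 k) ∩ intrinsicFrontier ℝ (Delta1 k)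
      = convexHull ℝ (setA k) ∧
    intrinsicFrontier ℝ (Delta0 k) ∩ intrinsicFrontier ℝ (Delta2 k)
      = convexHull ℝ (setC k) :=
  ⟨Delta1_inter_Delta2 k, setB_subset_intrinsicInterior_Delta0 k,
    intrinsicFrontier_Delta0_inter_intrinsicFrontier_Delta1 k,
    intrinsicFrontier_Delta0_inter_intrinsicFrontier_Delta2 k⟩

/-- `⟨A ∪ B⟩ ∩ ⟨B ∪ C⟩ = ⟨B⟩`; every point of `B` lies in the intrinsic interior of
`Δ₀`, so the intrinsic boundaries of `Δ₀` and `Δ₁` meet exactly in `⟨A⟩`, and the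
intrinsic boundaries of `Δ₀` and `Δ₂` meet exactly in `⟨C⟩`. -/
theorem stmt_5 (k : ℕ) (hk : 2 ≤ k) :
    Delta1 k ∩ Delta2 k = convexHull ℝ (setB k) ∧
    setB k ⊆ intrinsicInterior ℝ (Delta0 k) ∧
    intrinsicFrontier ℝ (Delta0 k) ∩ intrinsicFrontier ℝ (Delta1 k)
      = convexHull ℝ (setA k) ∧
    intrinsicFrontier ℝ (Delta0 k) ∩ intrinsicFrontier ℝ (Delta2 k)
      = convexHull ℝ (setC k) :=
  stmt_5_general k
end
end

section
/- Let S be a good set with A₁ ∈ S and B₁ ∈ S and such that S contains at least two elements of B. Fix an enumeration of the elements of S as the rows of a 2k × 2k real matrix M_B, and let M_C be the matrix obtained from M_B by replacing the row equal to B₁ with C₁ (all other rows unchanged). Then det(M_B)·det(M_C) < 0; in particular B₁ and C₁ lie strictly on opposite sides of the affine hyperplane spanned by S \ {B₁}. -/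
noncomputable section

/-! With `D = 2(2k - 1)` one has `D • B_j = 2 • 𝟙 - (A_j + C_j)`; summing over the set `T` of
indices with `B_j ∈ S` gives `(2|T| - 1) • 𝟙 = D • ∑_{j ∈ T} B_j - ∑_{j ∉ T} (A_j + C_j)`.
A good set meets each triple `{A_j, B_j, C_j}` in exactly two points (there are `k` triples,
`2k` points and no full triple), so for `j ∉ T` both `A_j, C_j ∈ S`. Hence `𝟙`, then every
`A_j + C_j`, then every `A_j` and `C_j` lie in the span of `S`, and `det M_B ≠ 0`.
The linear functional sending `v` to the determinant of `M_B` with the row `B₁` replaced by `v`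
kills `S \ {B₁}`; applying it to both identities gives
`(2|T| - 1) det M_C = (3 - 2|T|) D det M_B`, and `|T| ≥ 2` makes the coefficient negative. -/

open Finset

section Vectors

variable {k : ℕ}

lemma two_mul_two_mul_sub_one_ne_zero (k : ℕ) : 2 * (2 * (k : ℝ) - 1) ≠ 0 := by
  have : (2 * k : ℝ) ≠ 1 := by exact_mod_cast (by omega : 2 * k ≠ 1)
  exact mul_ne_zero two_ne_zero (sub_ne_zero.2 this)

lemma vA_eq_single (j : Fin k) : vA k j = Pi.single (Sum.inl j) 1 := by
  funext x
  cases x <;> simp [vA, Pi.single_apply, eq_comm]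

lemma vC_eq_single (j : Fin k) : vC k j = Pi.single (Sum.inr j) 1 := by
  funext x
  cases x <;> simp [vC, Pi.single_apply, eq_comm]

lemma vB_apply_ne_zero (j : Fin k) (x : Fin k ⊕ Fin k) : vB k j x ≠ 0 := by
  have hD := two_mul_two_mul_sub_one_ne_zero k
  cases x <;> exact div_ne_zero (by split_ifs <;> norm_num) hD

lemma vA_ne_vB (j j' : Fin k) : vA k j ≠ vB k j' :=
  fun h => vB_apply_ne_zero j' (.inr j') (by rw [← h]; rfl)

lemma vC_ne_vB (j j' : Fin k) : vC k j ≠ vB k j' :=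
  fun h => vB_apply_ne_zero j' (.inl j') (by rw [← h]; rfl)

lemma vB_injective : Function.Injective (vB k) := by
  intro j j' h
  by_contra hne
  have hD := two_mul_two_mul_sub_one_ne_zero k
  have := congrFun h (.inl j)
  simp only [vB, if_neg hne] at this
  rw [div_left_inj' hD] at this
  norm_num at this

lemma smul_vB (j : Fin k) :
    (2 * (2 * (k : ℝ) - 1)) • vB k j = (2 : ℝ) • 1 - (vA k j + vC k j) := by
  have hD := two_mul_two_mul_sub_one_ne_zero k
  funext x
  cases x <;>
  · simp only [Pi.smul_apply, Pi.sub_apply, Pi.add_apply, Pi.one_apply, smul_eq_mul, vA, vB, vC]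
    rw [mul_div_cancel₀ _ hD]
    split_ifs <;> ring

lemma sum_vA_add_vC : ∑ j, (vA k j + vC k j) = 1 := by
  funext x
  cases x <;> simp [Finset.sum_apply, vA, vC]

lemma smul_sum_vB_sub_sum_vA_add_vC (T : Finset (Fin k)) :
    (2 * (2 * (k : ℝ) - 1)) • ∑ j ∈ T, vB k j - ∑ j ∈ Tᶜ, (vA k j + vC k j)
      = (2 * (#T : ℝ) - 1) • 1 := by
  have hcompl := sum_add_sum_compl T (fun j => vA k j + vC k j)
  rw [sum_vA_add_vC] at hcompl
  simp only [smul_sum, smul_vB, sum_sub_distrib, sum_const]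
  rw [← hcompl]
  module

end Vectors

lemma ncard_inter_setB (k : ℕ) (S : Set (V k)) [DecidablePred (vB k · ∈ S)] :
    (S ∩ setB k).ncard = #{j | vB k j ∈ S} := by
  rw [← Set.ncard_coe_finset, ← Set.ncard_image_of_injective _ vB_injective]
  congr 1
  ext v
  constructor
  · rintro ⟨hv, j, rfl⟩
    exact ⟨j, by simpa using hv, rfl⟩
  · rintro ⟨j, hj, rfl⟩
    exact ⟨by simpa using hj, j, rfl⟩

theorem Matrix.det_of_ne_zero_of_span_range_eq_top {K ι : Type*} [Field K] [Fintype ι]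
    [DecidableEq ι] {r : ι → ι → K} (h : Submodule.span K (Set.range r) = ⊤) :
    (Matrix.of r).det ≠ 0 := by
  have hli : LinearIndependent K r :=
    linearIndependent_of_top_le_span_of_card_eq_finrank h.ge (by simp)
  rw [← Pi.basisFun_det_apply]
  exact ((Module.Basis.is_basis_iff_det _).1 ⟨hli, h⟩).ne_zero

theorem Set.ncard_inter_eq_of_forall_ncard_inter_le {α ι : Type*} [Fintype ι] {S : Set α}
    {t : ι → Set α} {c : ℕ} (hcover : S ⊆ ⋃ i, t i) (hle : ∀ i, (S ∩ t i).ncard ≤ c)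
    (hcard : c * Fintype.card ι ≤ S.ncard) (i : ι) : (S ∩ t i).ncard = c := by
  by_contra hne
  have hsum : ∑ i', (S ∩ t i').ncard < ∑ _i' : ι, c :=
    Finset.sum_lt_sum (fun i' _ => hle i') ⟨i, Finset.mem_univ i, (hle i).lt_of_ne hne⟩
  have hunion : S.ncard ≤ ∑ i', (S ∩ t i').ncard := by
    calc S.ncard = (⋃ i', S ∩ t i').ncard := by rw [← Set.inter_iUnion, Set.inter_eq_left.2 hcover]
      _ ≤ _ := Set.ncard_iUnion_le_of_fintype _
  simp only [sum_const, card_univ, smul_eq_mul] at hsum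
  lia

namespace IsGood

variable {k : ℕ} {S : Set (V k)}

lemma ncard_inter_triple (hS : IsGood k S) (j : Fin k) :
    (S ∩ {vA k j, vB k j, vC k j}).ncard = 2 := by
  obtain ⟨hSX, hcard, hnot, -⟩ := hS
  refine Set.ncard_inter_eq_of_forall_ncard_inter_le (S := S) (c := 2)
    (t := fun i => {vA k i, vB k i, vC k i}) ?_ (fun i => ?_) (by simp [hcard]) j
  · intro v hv
    rcases hSX hv with (⟨i, rfl⟩ | ⟨i, rfl⟩) | ⟨i, rfl⟩ <;> exact Set.mem_iUnion.2 ⟨i, by simp⟩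
  · have hssub : S ∩ {vA k i, vB k i, vC k i} ⊂ {vA k i, vB k i, vC k i} :=
      Set.inter_subset_right.ssubset_of_ne fun h => hnot i (h ▸ Set.inter_subset_left)
    have hle3 : ({vA k i, vB k i, vC k i} : Set (V k)).ncard ≤ 3 :=
      (Set.ncard_insert_le _ _).trans (Nat.succ_le_succ ((Set.ncard_insert_le _ _).trans (by simp)))
    have := Set.ncard_lt_ncard hssub
    lia

lemma vA_mem_and_vC_mem (hS : IsGood k S) {j : Fin k} (hB : vB k j ∉ S) :
    vA k j ∈ S ∧ vC k j ∈ S := by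
  have h2 := hS.ncard_inter_triple j
  constructor <;> by_contra h
  · have : S ∩ {vA k j, vB k j, vC k j} ⊆ {vC k j} := by
      rintro v ⟨hv, rfl | rfl | rfl⟩ <;> simp_all
    have := Set.ncard_le_ncard this
    simp_all
  · have : S ∩ {vA k j, vB k j, vC k j} ⊆ {vA k j} := by
      rintro v ⟨hv, rfl | rfl | rfl⟩ <;> simp_all
    have := Set.ncard_le_ncard this
    simp_all

lemma vA_mem_or_vC_mem (hS : IsGood k S) (j : Fin k) : vA k j ∈ S ∨ vC k j ∈ S := by
  by_contra! h
  have : S ∩ {vA k j, vB k j, vC k j} ⊆ {vB k j} := by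
    rintro v ⟨hv, rfl | rfl | rfl⟩ <;> simp_all
  have := Set.ncard_le_ncard this
  simp_all [hS.ncard_inter_triple j]

lemma span_eq_top (hS : IsGood k S) : Submodule.span ℝ S = ⊤ := by
  classical
  set W := Submodule.span ℝ S
  set T : Finset (Fin k) := {j | vB k j ∈ S}
  have hone : (1 : V k) ∈ W := by
    have hT : (2 * (#T : ℝ) - 1) ≠ 0 := by
      have : (2 * #T : ℝ) ≠ 1 := by exact_mod_cast (by omega : 2 * #T ≠ 1)
      exact sub_ne_zero.2 this
    have hmem : (2 * (#T : ℝ) - 1) • (1 : V k) ∈ W := by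
      rw [← smul_sum_vB_sub_sum_vA_add_vC T]
      refine sub_mem (W.smul_mem _ (sum_mem fun j hj => ?_)) (sum_mem fun j hj => ?_)
      · exact Submodule.subset_span (mem_filter.1 hj).2
      · have := hS.vA_mem_and_vC_mem (by simpa [T] using hj)
        exact add_mem (Submodule.subset_span this.1) (Submodule.subset_span this.2)
    simpa [smul_smul, hT] using W.smul_mem (2 * (#T : ℝ) - 1)⁻¹ hmem
  have hAC : ∀ j, vA k j + vC k j ∈ W := by
    intro j
    by_cases hB : vB k j ∈ S
    · rw [← sub_sub_cancel ((2 : ℝ) • (1 : V k)) (vA k j + vC k j), ← smul_vB]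
      exact sub_mem (W.smul_mem _ hone) (W.smul_mem _ (Submodule.subset_span hB))
    · have := hS.vA_mem_and_vC_mem hB
      exact add_mem (Submodule.subset_span this.1) (Submodule.subset_span this.2)
  have hA : ∀ j, vA k j ∈ W ∧ vC k j ∈ W := by
    intro j
    rcases hS.vA_mem_or_vC_mem j with h | h
    · exact ⟨Submodule.subset_span h, by
        simpa using sub_mem (hAC j) (Submodule.subset_span h)⟩
    · exact ⟨by simpa using sub_mem (hAC j) (Submodule.subset_span h), Submodule.subset_span h⟩
  rw [eq_top_iff, ← (Pi.basisFun ℝ (Fin k ⊕ Fin k)).span_eq, Submodule.span_le]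
  rintro _ ⟨j | j, rfl⟩
  · simpa [vA_eq_single] using (hA j).1
  · simpa [vC_eq_single] using (hA j).2

lemma mul_apply_vC_eq (hS : IsGood k S) {z : Fin k} (hA : vA k z ∈ S) (hB : vB k z ∈ S)
    (L : V k →ₗ[ℝ] ℝ) (hL : ∀ v ∈ S, v ≠ vB k z → L v = 0) :
    (2 * (S ∩ setB k).ncard - 1 : ℝ) * L (vC k z)
      = (3 - 2 * (S ∩ setB k).ncard) * (2 * (2 * (k : ℝ) - 1)) * L (vB k z) := by
  classical
  set T : Finset (Fin k) := {j | vB k j ∈ S}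
  rw [ncard_inter_setB]
  have hsumB : ∑ j ∈ T, L (vB k j) = L (vB k z) :=
    sum_eq_single_of_mem z (by simpa [T] using hB) fun j hj hne =>
      hL _ (mem_filter.1 hj).2 (vB_injective.ne hne)
  have hsumAC : ∑ j ∈ Tᶜ, (L (vA k j) + L (vC k j)) = 0 :=
    sum_eq_zero fun j hj => by
      have := hS.vA_mem_and_vC_mem (by simpa [T] using hj)
      rw [hL _ this.1 (vA_ne_vB _ _), hL _ this.2 (vC_ne_vB _ _), add_zero]
  have hone := congrArg L (smul_sum_vB_sub_sum_vA_add_vC T)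
  simp only [map_sub, map_smul, map_sum, map_add, hsumB, hsumAC, smul_eq_mul] at hone
  have hBz := congrArg L (smul_vB z)
  simp only [map_sub, map_smul, map_add, hL _ hA (vA_ne_vB _ _), smul_eq_mul] at hBz
  linear_combination (2 * (#T : ℝ) - 1) * hBz - 2 * hone

lemma apply_vB_mul_apply_vC_neg (hS : IsGood k S) {z : Fin k} (hA : vA k z ∈ S)
    (hB : vB k z ∈ S) (htwo : 2 ≤ (S ∩ setB k).ncard) (L : V k →ₗ[ℝ] ℝ)
    (hL : ∀ v ∈ S, v ≠ vB k z → L v = 0) (hLB : L (vB k z) ≠ 0) :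
    L (vB k z) * L (vC k z) < 0 := by
  have key := hS.mul_apply_vC_eq hA hB L hL
  have hm : (2 : ℝ) ≤ (S ∩ setB k).ncard := by exact_mod_cast htwo
  set m : ℝ := ((S ∩ setB k).ncard : ℝ)
  have hD : (0 : ℝ) < 2 * (2 * (k : ℝ) - 1) := by
    have : (1 : ℝ) ≤ k := by exact_mod_cast z.pos
    linarith
  have hneg : (2 * m - 1) * (L (vB k z) * L (vC k z)) < 0 := by
    calc (2 * m - 1) * (L (vB k z) * L (vC k z))
        = (3 - 2 * m) * (2 * (2 * (k : ℝ) - 1)) * (L (vB k z) * L (vB k z)) := by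
          linear_combination L (vB k z) * key
      _ < 0 := mul_neg_of_neg_of_pos (mul_neg_of_neg_of_pos (by linarith) hD)
          (mul_self_pos.2 hLB)
  exact neg_of_mul_neg_right hneg (by linarith)

end IsGood

/-- Let `S` be good with `A₁, B₁ ∈ S` and containing at least two elements of `B`.
Enumerate the elements of `S` as the rows of a `2k × 2k` matrix `M_B`; let `M_C` be
obtained by replacing the row equal to `B₁` with `C₁`.  Then `det(M_B)·det(M_C) < 0`,
i.e. `B₁` and `C₁` lie strictly on opposite sides of the affine hyperplane spanned by
`S \ {B₁}`. -/
theorem stmt_7 (k : ℕ) (hk : 2 ≤ k) (S : Set (V k)) (hS : IsGood k S)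
    (hA1 : vA k ⟨0, by omega⟩ ∈ S) (hB1 : vB k ⟨0, by omega⟩ ∈ S)
    (htwo : 2 ≤ (S ∩ setB k).ncard)
    (r : (Fin k ⊕ Fin k) → V k)
    (hrange : Set.range r = S)
    (i₀ : Fin k ⊕ Fin k) (hi₀ : r i₀ = vB k ⟨0, by omega⟩) :
    (Matrix.of fun i j => r i j).det *
      (Matrix.of fun i j => Function.update r i₀ (vC k ⟨0, by omega⟩) i j).det < 0 := by
  set z : Fin k := ⟨0, by omega⟩
  let L := (Matrix.detRowAlternating : (Fin k ⊕ Fin k → ℝ) [⋀^(Fin k ⊕ Fin k)]→ₗ[ℝ] ℝ)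
    |>.toMultilinearMap.toLinearMap r i₀
  have hL : ∀ v ∈ S, v ≠ vB k z → L v = 0 := by
    rintro v hv hne
    obtain ⟨i, rfl⟩ : v ∈ Set.range r := hrange ▸ hv
    have hi : i ≠ i₀ := by rintro rfl; exact hne hi₀
    exact Matrix.detRowAlternating.map_eq_zero_of_eq _ (by simp [Function.update_of_ne hi]) hi
  have hLB : L (vB k z) = (Matrix.of fun i j => r i j).det := by
    rw [← hi₀]
    exact congrArg Matrix.detRowAlternating (Function.update_eq_self i₀ r)
  have hdet : L (vB k z) ≠ 0 :=
    hLB ▸ Matrix.det_of_ne_zero_of_span_range_eq_top (hrange ▸ hS.span_eq_top)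
  rw [← hLB]
  exact hS.apply_vB_mul_apply_vC_neg hA1 hB1 htwo L hL hdet
end
end

section
/- For every pair of good sets S₁ and S₂, convexHull(S₁) ∩ convexHull(S₂) = convexHull(S₁ ∩ S₂). (In particular, the good simplices triangulate Δ₀: any two of them intersect exactly in the convex hull of their common vertices.) -/
noncomputable section

/-!
A good set misses exactly one vertex of each triple `{A_j, B_j, C_j}` (it has `2k` of the `3k`
points and no full triple), and does not miss every `B_j`. Suppose two nonnegative combinations,
supported on good sets, represent the same point, and let `d` be the difference of their weights.
Comparing coordinates gives `d(A_j) = d(C_j) = (d(B_j) - 2 ∑ d(B)) / (2n)`. At a vertex missed by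
the first set `d ≤ 0`, at one missed by the second `d ≥ 0`; at a missed `A_j` or `C_j` this compares
`d(B_j)` with `2 ∑ d(B)`. If `∑ d(B) > 0`, every `d(B_j)` is then nonnegative while some
`d(B_j) ≥ 2 ∑ d(B)`, which is absurd; symmetrically `∑ d(B) ≥ 0`, and then `d = 0`. Weights are
therefore unique across good simplices, so a common point of two of them is a convex combination
of their common vertices.
-/

open Finset

theorem mem_convexHull_image_iff_exists_weights {𝕜 E ι : Type*} [Field 𝕜] [LinearOrder 𝕜]
    [IsStrictOrderedRing 𝕜] [AddCommGroup E] [Module 𝕜 E] [Fintype ι] {p : ι → E} {T : Set ι}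
    {x : E} :
    x ∈ convexHull 𝕜 (p '' T) ↔ ∃ w : ι → 𝕜, (∀ i, 0 ≤ w i) ∧ (∀ i ∉ T, w i = 0) ∧
      ∑ i, w i = 1 ∧ ∑ i, w i • p i = x := by
  classical
  constructor
  · refine fun hx => convexHull_min (t := {x | ∃ w : ι → 𝕜, (∀ i, 0 ≤ w i) ∧
      (∀ i ∉ T, w i = 0) ∧ ∑ i, w i = 1 ∧ ∑ i, w i • p i = x}) ?_ ?_ hx
    · rintro _ ⟨i, hi, rfl⟩
      refine ⟨Pi.single i 1, Pi.single_nonneg.2 zero_le_one, fun j hj => ?_, by simp, by simp⟩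
      exact Pi.single_eq_of_ne (by rintro rfl; exact hj hi) 1
    · rintro _ ⟨w, hw₀, hwT, hw₁, rfl⟩ _ ⟨w', hw₀', hwT', hw₁', rfl⟩ a b ha hb hab
      refine ⟨a • w + b • w', fun i => ?_, fun i hi => ?_, ?_, ?_⟩
      · simp only [Pi.add_apply, Pi.smul_apply, smul_eq_mul]
        exact add_nonneg (mul_nonneg ha (hw₀ i)) (mul_nonneg hb (hw₀' i))
      · simp [hwT i hi, hwT' i hi]
      · simp [sum_add_distrib, ← mul_sum, hw₁, hw₁', hab]
      · simp [add_smul, mul_smul, sum_add_distrib, smul_sum]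
  · rintro ⟨w, hw₀, hwT, hw₁, rfl⟩
    have hsupp : ∀ i ∈ univ, w i ≠ 0 → i ∈ T := fun i _ hi => by_contra fun h => hi (hwT i h)
    rw [← sum_filter_of_ne hsupp] at hw₁
    rw [← sum_filter_of_ne fun i hi hwi => hsupp i hi (by rintro h; simp [h] at hwi)]
    exact (convex_convexHull 𝕜 _).sum_mem (fun i _ => hw₀ i) hw₁
      fun i hi => subset_convexHull 𝕜 _ ⟨i, (mem_filter.1 hi).2, rfl⟩

theorem convexHull_image_inter_eq_of_weights_unique {𝕜 E ι : Type*} [Field 𝕜] [LinearOrder 𝕜]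
    [IsStrictOrderedRing 𝕜] [AddCommGroup E] [Module 𝕜 E] [Fintype ι] {p : ι → E}
    {T₁ T₂ : Set ι}
    (h : ∀ w₁ w₂ : ι → 𝕜, (∀ i, 0 ≤ w₁ i) → (∀ i, 0 ≤ w₂ i) → (∀ i ∉ T₁, w₁ i = 0) →
      (∀ i ∉ T₂, w₂ i = 0) →
      Fintype.linearCombination 𝕜 p w₁ = Fintype.linearCombination 𝕜 p w₂ → w₁ = w₂) :
    convexHull 𝕜 (p '' T₁) ∩ convexHull 𝕜 (p '' T₂) = convexHull 𝕜 (p '' (T₁ ∩ T₂)) := by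
  refine subset_antisymm ?_ (Set.subset_inter (convexHull_mono (Set.image_mono
    Set.inter_subset_left)) (convexHull_mono (Set.image_mono Set.inter_subset_right)))
  rintro x ⟨hx₁, hx₂⟩
  obtain ⟨w₁, hw₁, hwT₁, hsum, rfl⟩ := mem_convexHull_image_iff_exists_weights.1 hx₁
  obtain ⟨w₂, hw₂, hwT₂, -, hx⟩ := mem_convexHull_image_iff_exists_weights.1 hx₂
  obtain rfl := h w₁ w₂ hw₁ hw₂ hwT₁ hwT₂ (by simp only [Fintype.linearCombination_apply, hx])
  refine mem_convexHull_image_iff_exists_weights.2 ⟨w₁, hw₁, fun i hi => ?_, hsum, rfl⟩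
  rcases not_and_or.1 hi with hi | hi
  exacts [hwT₁ i hi, hwT₂ i hi]

theorem Set.exists_eq_graph_of_ncard_le {α β : Type*} [Finite α] [Finite β] {G : Set (α × β)}
    (hcard : G.ncard ≤ Nat.card α) (hG : ∀ a, ∃ b, (a, b) ∈ G) :
    ∃ f : α → β, G = {p | p.2 = f p.1} := by
  choose f hf using hG
  have hgraph : {p : α × β | p.2 = f p.1} = Set.range fun a => (a, f a) := by
    ext ⟨a, b⟩; simp [eq_comm]
  refine ⟨f, (Set.eq_of_subset_of_ncard_le ?_ ?_).symm⟩
  · rintro ⟨a, b⟩ (rfl : b = f a); exact hf a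
  · rwa [hgraph, Set.ncard_range_of_injective fun a a' h => congrArg Prod.fst h]

theorem sum_nonpos_of_forall_nonneg_or_two_mul_sum_le {ι : Type*} [Fintype ι] {t : ι → ℝ}
    (h : ∀ i, 0 ≤ t i ∨ 2 * ∑ j, t j ≤ t i) {i₀ : ι} (hi₀ : 2 * ∑ j, t j ≤ t i₀) :
    ∑ j, t j ≤ 0 := by
  by_contra! hpos
  have hnonneg : ∀ i, 0 ≤ t i := fun i => (h i).elim id fun hi => by linarith
  linarith [Finset.single_le_sum (fun i _ => hnonneg i) (Finset.mem_univ i₀)]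

def vertex (k : ℕ) (p : Fin k × Fin 3) : V k := ![vA k p.1, vB k p.1, vC k p.1] p.2

theorem range_vertex (k : ℕ) : Set.range (vertex k) = setX k := by
  ext x
  simp [vertex, setX, setA, setB, setC, Fin.exists_fin_succ, exists_or, or_assoc]

theorem image_vertex_setOf_snd_ne_one (k : ℕ) : vertex k '' {p | p.2 ≠ 1} = setA k ∪ setC k := by
  ext x
  simp [vertex, setA, setC, Fin.exists_fin_succ, exists_or]

theorem linearCombination_vertex_inl (k : ℕ) (w : Fin k × Fin 3 → ℝ) (i : Fin k) :
    Fintype.linearCombination ℝ (vertex k) w (.inl i) =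
      w (i, 0) + (2 * ∑ j, w (j, 1) - w (i, 1)) / (2 * (2 * k - 1)) := by
  simp only [Fintype.linearCombination_apply, vertex, Nat.succ_eq_add_one, Nat.reduceAdd,
    Finset.sum_apply, Pi.smul_apply, Matrix.cons_val', vA, vB, mul_sub, mul_one, vC,
    Matrix.cons_val_fin_one, smul_eq_mul, Fintype.sum_prod_type, Fin.sum_univ_three, Fin.isValue,
    Matrix.cons_val_zero, mul_ite, mul_zero, Matrix.cons_val_one, mul_div_assoc', Matrix.cons_val,
    add_zero, sum_add_distrib, sum_ite_eq, mem_univ, ↓reduceIte, ← sum_div, sum_sub_distrib,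
    ← sum_mul, add_right_inj]
  ring

theorem linearCombination_vertex_inr (k : ℕ) (w : Fin k × Fin 3 → ℝ) (i : Fin k) :
    Fintype.linearCombination ℝ (vertex k) w (.inr i) =
      w (i, 2) + (2 * ∑ j, w (j, 1) - w (i, 1)) / (2 * (2 * k - 1)) := by
  simp only [Fintype.linearCombination_apply, vertex, Nat.succ_eq_add_one, Nat.reduceAdd,
    Finset.sum_apply, Pi.smul_apply, Matrix.cons_val', vA, vB, mul_sub, mul_one, vC,
    Matrix.cons_val_fin_one, smul_eq_mul, Fintype.sum_prod_type, Fin.sum_univ_three, Fin.isValue,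
    Matrix.cons_val_zero, mul_zero, Matrix.cons_val_one, mul_div_assoc', mul_ite, zero_add,
    Matrix.cons_val, sum_add_distrib, ← sum_div, sum_sub_distrib, ← sum_mul, sum_ite_eq, mem_univ,
    ↓reduceIte]
  ring

theorem two_mul_sub_one_ne_zero (k : ℕ) : (2 * (k : ℝ) - 1) ≠ 0 := by
  intro h
  have : (2 * k : ℝ) = 1 := by linarith
  norm_cast at this
  omega

theorem two_mul_two_mul_sub_one_pos {k : ℕ} (hk : 0 < k) : (0 : ℝ) < 2 * (2 * k - 1) := by
  have : (1 : ℝ) ≤ k := Nat.one_le_cast.2 hk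
  linarith

theorem weight_mul_eq_of_linearCombination_vertex_eq_zero {k : ℕ} {d : Fin k × Fin 3 → ℝ}
    (hd : Fintype.linearCombination ℝ (vertex k) d = 0) {i : Fin k} {m : Fin 3} (hm : m ≠ 1) :
    d (i, m) * (2 * (2 * k - 1)) = d (i, 1) - 2 * ∑ j, d (j, 1) := by
  have hN := two_mul_sub_one_ne_zero k
  obtain rfl | rfl : m = 0 ∨ m = 2 := by omega
  · have h := congrFun hd (.inl i)
    rw [linearCombination_vertex_inl, Pi.zero_apply] at h
    field_simp at h
    linear_combination h
  · have h := congrFun hd (.inr i)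
    rw [linearCombination_vertex_inr, Pi.zero_apply] at h
    field_simp at h
    linear_combination h

theorem sum_weight_one_nonpos_of_linearCombination_vertex_eq_zero {k : ℕ}
    {d : Fin k × Fin 3 → ℝ} (hd : Fintype.linearCombination ℝ (vertex k) d = 0)
    {o : Fin k → Fin 3} (ho : ∀ j, 0 ≤ d (j, o j)) {j₀ : Fin k} (hj₀ : o j₀ ≠ 1) :
    ∑ j, d (j, 1) ≤ 0 := by
  have hN := two_mul_two_mul_sub_one_pos j₀.pos
  have hle : ∀ j, o j ≠ 1 → 2 * ∑ i, d (i, 1) ≤ d (j, 1) := fun j hj => by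
    linarith [weight_mul_eq_of_linearCombination_vertex_eq_zero hd (i := j) hj,
      mul_nonneg (ho j) hN.le]
  refine sum_nonpos_of_forall_nonneg_or_two_mul_sum_le (fun j => ?_) (hle j₀ hj₀)
  by_cases hj : o j = 1
  · exact .inl (hj ▸ ho j)
  · exact .inr (hle j hj)

theorem eq_zero_of_linearCombination_vertex_eq_zero {k : ℕ} {d : Fin k × Fin 3 → ℝ}
    (hd : Fintype.linearCombination ℝ (vertex k) d = 0) {o₁ o₂ : Fin k → Fin 3}
    (h₁ : ∀ j, d (j, o₁ j) ≤ 0) (h₂ : ∀ j, 0 ≤ d (j, o₂ j)) (ho₁ : ∃ j, o₁ j ≠ 1)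
    (ho₂ : ∃ j, o₂ j ≠ 1) : d = 0 := by
  obtain ⟨j₁, hj₁⟩ := ho₁
  obtain ⟨j₂, hj₂⟩ := ho₂
  have hsum : ∑ j, d (j, 1) = 0 := by
    refine le_antisymm (sum_weight_one_nonpos_of_linearCombination_vertex_eq_zero hd h₂ hj₂) ?_
    have := sum_weight_one_nonpos_of_linearCombination_vertex_eq_zero (d := -d)
      (by rw [map_neg, hd, neg_zero]) (fun j => neg_nonneg.2 (h₁ j)) hj₁
    simpa using this
  have hN := two_mul_two_mul_sub_one_pos j₁.pos
  have hmul : ∀ j m, m ≠ 1 → d (j, m) * (2 * (2 * k - 1)) = d (j, 1) := fun j m hm => by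
    rw [weight_mul_eq_of_linearCombination_vertex_eq_zero hd hm, hsum, mul_zero, sub_zero]
  have hone : ∀ j, d (j, 1) = 0 := by
    intro j
    apply le_antisymm
    · by_cases hj : o₁ j = 1
      · exact hj ▸ h₁ j
      · exact hmul j _ hj ▸ mul_nonpos_of_nonpos_of_nonneg (h₁ j) hN.le
    · by_cases hj : o₂ j = 1
      · exact hj ▸ h₂ j
      · exact hmul j _ hj ▸ mul_nonneg (h₂ j) hN.le
  funext ⟨j, m⟩
  by_cases hm : m = 1
  · exact hm ▸ hone j
  · simpa [hone j, hN.ne'] using hmul j m hm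

-- Uniqueness of weights, applied to the one-vertex combinations `single p 1` and `single q 1`.
theorem vertex_injective (k : ℕ) : Function.Injective (vertex k) := by
  classical
  intro p q hpq
  let other (m : Fin 3) : Fin 3 := if m = 0 then 2 else 0
  have hother : ∀ m, other m ≠ m ∧ other m ≠ 1 := by decide
  have hoff (r : Fin k × Fin 3) (j : Fin k) :
      (Pi.single r 1 : Fin k × Fin 3 → ℝ) (j, other r.2) = 0 :=
    Pi.single_eq_of_ne (fun h : (j, other r.2) = r => (hother r.2).1 (congrArg Prod.snd h)) _
  have hnonneg (r : Fin k × Fin 3) : (0 : Fin k × Fin 3 → ℝ) ≤ Pi.single r 1 :=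
    Pi.single_nonneg.2 zero_le_one
  have h0 := eq_zero_of_linearCombination_vertex_eq_zero (d := Pi.single p 1 - Pi.single q 1)
    (by simp [Fintype.linearCombination_apply_single, hpq]) (o₁ := fun _ => other p.2)
    (o₂ := fun _ => other q.2) (fun j => by simpa [hoff] using hnonneg q (j, other p.2))
    (fun j => by simpa [hoff] using hnonneg p (j, other q.2))
    ⟨p.1, (hother p.2).2⟩ ⟨q.1, (hother q.2).2⟩
  by_contra hne
  simpa [Pi.single_eq_of_ne (Ne.symm hne)] using congrFun h0 q

theorem IsGood.exists_eq_image_vertex {k : ℕ} {S : Set (V k)} (hS : IsGood k S) :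
    ∃ o : Fin k → Fin 3, (∃ j, o j ≠ 1) ∧ S = vertex k '' {p | p.2 ≠ o p.1} := by
  obtain ⟨hX, hcard, htriple, hAC⟩ := hS
  rw [← range_vertex] at hX
  have hS : S = vertex k '' (vertex k ⁻¹' S) := (Set.image_preimage_eq_of_subset hX).symm
  have hcompl : (vertex k ⁻¹' S)ᶜ.ncard ≤ Nat.card (Fin k) := by
    have h := Set.ncard_add_ncard_compl (vertex k ⁻¹' S)
    rw [Set.ncard_preimage_of_injective_subset_range (vertex_injective k) hX, hcard] at h
    simp only [Nat.card_eq_fintype_card, Fintype.card_prod, Fintype.card_fin] at h ⊢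
    omega
  have hmiss : ∀ j, ∃ m, (j, m) ∈ (vertex k ⁻¹' S)ᶜ := by
    intro j
    by_contra! h
    simp only [Set.mem_compl_iff, Set.mem_preimage, not_not] at h
    refine htriple j ?_
    rintro _ (rfl | rfl | rfl)
    exacts [h 0, h 1, h 2]
  obtain ⟨o, ho⟩ := Set.exists_eq_graph_of_ncard_le hcompl hmiss
  have hpre : vertex k ⁻¹' S = {p | p.2 ≠ o p.1} := by
    rw [← compl_compl (vertex k ⁻¹' S), ho]
    rfl
  refine ⟨o, ?_, hpre ▸ hS⟩
  by_contra! hall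
  refine hAC ?_
  rw [hS, hpre, ← image_vertex_setOf_snd_ne_one]
  simp [hall]

theorem stmt_10_general (k : ℕ) (S₁ S₂ : Set (V k))
    (h₁ : IsGood k S₁) (h₂ : IsGood k S₂) :
    convexHull ℝ S₁ ∩ convexHull ℝ S₂ = convexHull ℝ (S₁ ∩ S₂) := by
  obtain ⟨o₁, ho₁, rfl⟩ := h₁.exists_eq_image_vertex
  obtain ⟨o₂, ho₂, rfl⟩ := h₂.exists_eq_image_vertex
  rw [← Set.image_inter (vertex_injective k)]
  refine convexHull_image_inter_eq_of_weights_unique fun w₁ w₂ hw₁ hw₂ hs₁ hs₂ heq => ?_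
  refine sub_eq_zero.1 (eq_zero_of_linearCombination_vertex_eq_zero ?_ (o₁ := o₁) (o₂ := o₂)
    (fun j => ?_) (fun j => ?_) ho₁ ho₂)
  · rw [map_sub, heq, sub_self]
  · simpa [hs₁ (j, o₁ j) (by simp)] using hw₂ (j, o₁ j)
  · simpa [hs₂ (j, o₂ j) (by simp)] using hw₁ (j, o₂ j)

/-- Any two good simplices intersect exactly in the convex hull of their common
vertices: the good simplices triangulate `Δ₀`. -/
theorem stmt_10 (k : ℕ) (hk : 2 ≤ k) (S₁ S₂ : Set (V k))
    (h₁ : IsGood k S₁) (h₂ : IsGood k S₂) :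
    convexHull ℝ S₁ ∩ convexHull ℝ S₂ = convexHull ℝ (S₁ ∩ S₂) :=
  stmt_10_general k S₁ S₂ h₁ h₂
end
end

section
/- The closure of Δ₀ \ (Δ₁ ∪ Δ₂) equals the union of the good simplices convexHull(S) taken over all good sets S other than A ∪ B and B ∪ C. (These 3^k − 3 simplices partition the modular block Ω.) -/
noncomputable section

/-!
A good set meets each column `{A_j, B_j, C_j}` in exactly two points, so it is the cell of the map
`σ : Fin k → Fin 3` giving the label (`0, 1, 2` for `A, B, C`) of the point omitted from column `j`.
The constant maps give `A ∪ C`, `A ∪ B` and `B ∪ C`, which leaves the `3^k − 3` non-constant ones.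

`Δ₀` is the standard simplex of `ℝ^{2k}`. Given `x ∈ Δ₀` with halves `(x, y)`, put
`m_j = min x_j y_j` and let `t ≥ min m` solve `2 ∑ (t − m_j)⁺ = t` (intermediate value theorem);
giving `B_j` the weight `2(2k − 1)(t − m_j)⁺` writes `x` as a convex combination of a cell other
than `A ∪ C`. Conversely every point of `Δ₁` satisfies `y ≤ x` and `(2k − 1) y_i ≤ 2 ∑ y`; a point
with positive weight on every vertex of a cell with non-constant `σ` violates one of these, and the
same holds for `Δ₂` after exchanging the halves. Such points are dense in the cell, so the cell
lies in `Ω`.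
-/

namespace ModularBlock

open Finset

variable {k : ℕ}

theorem fin_three_eq_two_of_ne {t : Fin 3} (h₀ : t ≠ 0) (h₁ : t ≠ 1) : t = 2 := by
  fin_cases t <;> simp_all

theorem min_eq_sub_max_sub (t m : ℝ) : min t m = t - max (t - m) 0 := by
  rcases le_total t m with h | h
  · rw [min_eq_left h, max_eq_right (by linarith)]
    ring
  · rw [min_eq_right h, max_eq_left (by linarith)]
    ring

theorem exists_eq_range_graph {α β : Type*} [Finite α] [Finite β] {U : Set (α × β)}
    (hU : U.ncard ≤ Nat.card α) (hfib : ∀ a, ∃ b, (a, b) ∈ U) :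
    ∃ f : α → β, U = Set.range fun a => (a, f a) := by
  choose f hf using hfib
  refine ⟨f, (Set.eq_of_subset_of_ncard_le (Set.range_subset_iff.2 hf) ?_).symm⟩
  rwa [Set.ncard_range_of_injective fun a a' h => (Prod.ext_iff.1 h).1]

theorem ncard_setOf_forall_ne_const {α β : Type*} [Finite α] [Finite β] [Nonempty α] :
    {f : α → β | ∀ b, f ≠ fun _ => b}.ncard = Nat.card β ^ Nat.card α - Nat.card β := by
  have : {f : α → β | ∀ b, f ≠ fun _ => b} = (Set.range (Function.const α))ᶜ := by
    ext f
    simp only [Set.mem_ofPred_eq, Set.mem_compl_iff, Set.mem_range, not_exists]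
    exact forall_congr' fun _ => ne_comm
  rw [this, Set.ncard_compl, Set.ncard_range_of_injective Function.const_injective, Nat.card_fun]

theorem mem_convexHull_image_iff {R E ι : Type*} [Field R] [LinearOrder R] [IsStrictOrderedRing R]
    [AddCommGroup E] [Module R E] [Fintype ι] {f : ι → E} {s : Set ι} {x : E} :
    x ∈ convexHull R (f '' s) ↔ ∃ w : ι → R, (∀ i, 0 ≤ w i) ∧ (∀ i ∉ s, w i = 0) ∧
      ∑ i, w i = 1 ∧ ∑ i, w i • f i = x := by
  classical
  constructor
  · refine fun hx => convexHull_min (t := {y | ∃ w : ι → R, (∀ i, 0 ≤ w i) ∧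
      (∀ i ∉ s, w i = 0) ∧ ∑ i, w i = 1 ∧ ∑ i, w i • f i = y}) ?_ ?_ hx
    · rintro _ ⟨i, hi, rfl⟩
      refine ⟨Pi.single i 1, fun j => ?_, fun j hj => ?_, by simp, by simp [Pi.single_apply]⟩
      · rw [Pi.single_apply]
        split_ifs <;> norm_num
      · simp [show j ≠ i from fun h => hj (h ▸ hi)]
    · rintro _ ⟨w, hw0, hws, hw1, rfl⟩ _ ⟨w', hw0', hws', hw1', rfl⟩ a b ha hb hab
      refine ⟨a • w + b • w', fun i => ?_, fun i hi => ?_, ?_, ?_⟩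
      · exact add_nonneg (mul_nonneg ha (hw0 i)) (mul_nonneg hb (hw0' i))
      · simp [hws i hi, hws' i hi]
      · simp [Finset.sum_add_distrib, ← Finset.mul_sum, hw1, hw1', hab]
      · simp [Finset.sum_add_distrib, Finset.smul_sum, add_smul, smul_smul]
  · rintro ⟨w, hw0, hws, hw1, rfl⟩
    have hsupp : ∀ i, w i ≠ 0 → i ∈ s := fun i h => by_contra fun hi => h (hws i hi)
    have hmem := (convex_convexHull R (f '' s)).sum_mem (t := univ.filter (· ∈ s)) (z := f)
      (fun i _ => hw0 i) (by rwa [sum_filter_of_ne fun i _ => hsupp i])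
      (fun i hi => subset_convexHull R _ ⟨i, (mem_filter.1 hi).2, rfl⟩)
    rwa [sum_filter_of_ne fun i _ h => hsupp i fun h0 => h (by rw [h0, zero_smul])] at hmem

theorem exists_sum_le_card_sub_one_mul {ι R : Type*} [Fintype ι] [Ring R] [LinearOrder R]
    [IsStrictOrderedRing R] {c : ι → R} (hpos : ∃ i, 0 < c i) (hzero : ∃ i, c i = 0) :
    ∃ i, 0 < c i ∧ ∑ j, c j ≤ (Fintype.card ι - 1) * c i := by
  classical
  obtain ⟨i₀, hi₀⟩ := hzero
  obtain ⟨i, -, hi⟩ := Finset.exists_max_image univ c ⟨i₀, mem_univ _⟩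
  obtain ⟨j, hj⟩ := hpos
  refine ⟨i, hj.trans_le (hi j (mem_univ j)), ?_⟩
  rw [← Finset.add_sum_erase _ _ (mem_univ i₀), hi₀, zero_add]
  calc ∑ j ∈ univ.erase i₀, c j ≤ (univ.erase i₀).card • c i :=
        Finset.sum_le_card_nsmul _ _ _ fun j _ => hi j (mem_univ j)
    _ = _ := by
        rw [card_erase_of_mem (mem_univ _), nsmul_eq_mul, card_univ,
          Nat.cast_pred (Fintype.card_pos_iff.2 ⟨i⟩)]

theorem exists_two_mul_sum_max_sub_eq {ι : Type*} [Fintype ι] [Nonempty ι] {m : ι → ℝ}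
    (hm : ∀ i, 0 ≤ m i) : ∃ t, (∃ i, m i ≤ t) ∧ 2 * ∑ i, max (t - m i) 0 = t := by
  obtain ⟨i₀, hi₀⟩ := Finite.exists_min m
  set f : ℝ → ℝ := fun t => 2 * ∑ i, max (t - m i) 0 - t
  have hf : Continuous f := by fun_prop
  have h₁ : f (m i₀) ≤ 0 := by
    have : ∑ i, max (m i₀ - m i) 0 = 0 :=
      Finset.sum_eq_zero fun i _ => max_eq_right (by linarith [hi₀ i])
    simp only [f, this]
    linarith [hm i₀]
  have h₂ : 0 ≤ f (2 * m i₀) := by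
    have := Finset.single_le_sum (f := fun i => max (2 * m i₀ - m i) 0)
      (fun i _ => le_max_right _ _) (mem_univ i₀)
    simp only [f]
    linarith [le_max_left (2 * m i₀ - m i₀) 0]
  obtain ⟨t, ⟨ht, -⟩, hft⟩ := intermediate_value_Icc (by linarith [hm i₀]) hf.continuousOn ⟨h₁, h₂⟩
  refine ⟨t, ⟨i₀, ht⟩, ?_⟩
  simp only [f] at hft
  linarith

section Coordinates

variable (j i : Fin k)

@[simp] theorem vA_inl : vA k j (.inl i) = if i = j then 1 else 0 := rfl
@[simp] theorem vA_inr : vA k j (.inr i) = 0 := rfl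
@[simp] theorem vB_inl : vB k j (.inl i) = (2 - if i = j then 1 else 0) / (2 * (2 * k - 1)) := rfl
@[simp] theorem vB_inr : vB k j (.inr i) = (2 - if i = j then 1 else 0) / (2 * (2 * k - 1)) := rfl
@[simp] theorem vC_inl : vC k j (.inl i) = 0 := rfl
@[simp] theorem vC_inr : vC k j (.inr i) = if i = j then 1 else 0 := rfl

end Coordinates

theorem two_mul_sub_one_pos (j : Fin k) : (0 : ℝ) < 2 * k - 1 := by
  have : (1 : ℝ) ≤ k := by exact_mod_cast j.pos
  linarith

theorem two_mul_sub_one_ne_zero (k : ℕ) : (2 * k - 1 : ℝ) ≠ 0 := by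
  intro h
  have : ((2 * k : ℕ) : ℝ) = 1 := by push_cast; linarith
  norm_cast at this
  omega

theorem sum_two_sub_ite (j : Fin k) :
    ∑ i : Fin k, (2 - if i = j then (1 : ℝ) else 0) = 2 * k - 1 := by
  simp [Finset.sum_sub_distrib, mul_comm]

theorem vB_pos (j : Fin k) (i : Fin k ⊕ Fin k) : 0 < vB k j i := by
  have hn := two_mul_sub_one_pos j
  have : (0 : ℝ) < 2 - if i.elim id id = j then 1 else 0 := by split_ifs <;> norm_num
  rcases i with i | i <;> exact div_pos this (by linarith)

theorem vB_injective : Function.Injective (vB k) := by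
  intro j j' h
  have hn := two_mul_sub_one_pos j
  have hj := congrFun h (.inl j)
  by_contra hne
  simp only [vB_inl, if_neg hne] at hj
  field_simp at hj
  norm_num at hj

def vertex (k : ℕ) (p : Fin k × Fin 3) : V k := ![vA k p.1, vB k p.1, vC k p.1] p.2

@[simp] theorem vertex_zero (j : Fin k) : vertex k (j, 0) = vA k j := rfl
@[simp] theorem vertex_one (j : Fin k) : vertex k (j, 1) = vB k j := rfl
@[simp] theorem vertex_two (j : Fin k) : vertex k (j, 2) = vC k j := rfl

theorem vertex_mem_stdSimplex (p : Fin k × Fin 3) : vertex k p ∈ stdSimplex ℝ (Fin k ⊕ Fin k) := by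
  obtain ⟨j, t⟩ := p
  have hn := two_mul_sub_one_pos j
  have hB : ∀ i, 0 ≤ (2 - if i = j then (1 : ℝ) else 0) / (2 * (2 * k - 1)) := fun i =>
    div_nonneg (by split_ifs <;> norm_num) (by linarith)
  refine ⟨fun i => ?_, ?_⟩
  · fin_cases t <;> rcases i with i | i <;> simp only [Fin.zero_eta, Fin.mk_one, Fin.reduceFinMk,
      vertex_zero, vertex_one, vertex_two, vA_inl, vA_inr, vB_inl, vB_inr, vC_inl, vC_inr]
    all_goals first | exact hB i | positivity
  · rw [Fintype.sum_sum_type]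
    fin_cases t
    · simp
    · simp only [Fin.mk_one, vertex_one, vB_inl, vB_inr, ← Finset.sum_div, sum_two_sub_ite]
      field_simp
      ring
    · simp

theorem vertex_injective : Function.Injective (vertex k) := by
  rintro ⟨j, t⟩ ⟨j', t'⟩ h
  have hl := congrFun h (.inl j)
  have hr := congrFun h (.inr j)
  fin_cases t <;> fin_cases t' <;>
    simp only [Fin.zero_eta, Fin.mk_one, Fin.reduceFinMk, Fin.isValue, vertex_zero, vertex_one,
      vertex_two, vA_inl, vA_inr, vC_inl, vC_inr, ↓reduceIte, left_eq_ite_iff, right_eq_ite_iff,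
      one_ne_zero, zero_ne_one, imp_false, Decidable.not_not, Prod.mk.injEq, and_true, and_false,
      Fin.reduceEq] at h hl hr ⊢
  · exact hl
  · exact (vB_pos j' _).ne hr
  · exact (vB_pos j _).ne' hr
  · exact vB_injective h
  · exact (vB_pos j _).ne' hl
  · exact (vB_pos j' _).ne hl
  · exact hr

theorem setX_eq_range_vertex : setX k = Set.range (vertex k) := by
  ext x
  simp only [setX, setA, setB, setC, Set.mem_union, Set.mem_range, Prod.exists]
  constructor
  · rintro ((⟨j, rfl⟩ | ⟨j, rfl⟩) | ⟨j, rfl⟩)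
    exacts [⟨j, 0, rfl⟩, ⟨j, 1, rfl⟩, ⟨j, 2, rfl⟩]
  · rintro ⟨j, t, rfl⟩
    fin_cases t
    exacts [.inl (.inl ⟨j, rfl⟩), .inl (.inr ⟨j, rfl⟩), .inr ⟨j, rfl⟩]

theorem Delta0_eq_stdSimplex : Delta0 k = stdSimplex ℝ (Fin k ⊕ Fin k) := by
  have hA : vA k = (fun i x => if i = x then (1 : ℝ) else 0) ∘ Sum.inl := by
    ext j (i | i) <;> simp [eq_comm]
  have hC : vC k = (fun i x => if i = x then (1 : ℝ) else 0) ∘ Sum.inr := by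
    ext j (i | i) <;> simp [eq_comm]
  rw [Delta0, setA, setC, hA, hC, ← Sum.range_eq, convexHull_basis_eq_stdSimplex]

def cell (k : ℕ) (σ : Fin k → Fin 3) : Set (V k) := vertex k '' {p | p.2 ≠ σ p.1}

theorem cell_const_zero : cell k (fun _ => 0) = setB k ∪ setC k := by
  ext x
  simp only [cell, setB, setC, Set.mem_image, Set.mem_ofPred_eq, Set.mem_union, Set.mem_range,
    Prod.exists]
  constructor
  · rintro ⟨j, t, ht, rfl⟩
    fin_cases t
    exacts [absurd rfl ht, .inl ⟨j, rfl⟩, .inr ⟨j, rfl⟩]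
  · rintro (⟨j, rfl⟩ | ⟨j, rfl⟩)
    exacts [⟨j, 1, by decide, rfl⟩, ⟨j, 2, by decide, rfl⟩]

theorem cell_const_one : cell k (fun _ => 1) = setA k ∪ setC k := by
  ext x
  simp only [cell, setA, setC, Set.mem_image, Set.mem_ofPred_eq, Set.mem_union, Set.mem_range,
    Prod.exists]
  constructor
  · rintro ⟨j, t, ht, rfl⟩
    fin_cases t
    exacts [.inl ⟨j, rfl⟩, absurd rfl ht, .inr ⟨j, rfl⟩]
  · rintro (⟨j, rfl⟩ | ⟨j, rfl⟩)
    exacts [⟨j, 0, by decide, rfl⟩, ⟨j, 2, by decide, rfl⟩]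

theorem cell_const_two : cell k (fun _ => 2) = setA k ∪ setB k := by
  ext x
  simp only [cell, setA, setB, Set.mem_image, Set.mem_ofPred_eq, Set.mem_union, Set.mem_range,
    Prod.exists]
  constructor
  · rintro ⟨j, t, ht, rfl⟩
    fin_cases t
    exacts [.inl ⟨j, rfl⟩, .inr ⟨j, rfl⟩, absurd rfl ht]
  · rintro (⟨j, rfl⟩ | ⟨j, rfl⟩)
    exacts [⟨j, 0, by decide, rfl⟩, ⟨j, 1, by decide, rfl⟩]

theorem cell_injective : Function.Injective (cell k) := by
  intro σ σ' h
  have h' : {p : Fin k × Fin 3 | p.2 ≠ σ p.1} = {p | p.2 ≠ σ' p.1} :=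
    (Set.image_injective.2 vertex_injective) h
  funext j
  by_contra hne
  have : (j, σ j) ∈ {p : Fin k × Fin 3 | p.2 ≠ σ' p.1} := hne
  rw [← h'] at this
  exact this rfl

theorem setOf_ne_eq_compl_range (σ : Fin k → Fin 3) :
    {p : Fin k × Fin 3 | p.2 ≠ σ p.1} = (Set.range fun j => (j, σ j))ᶜ := by
  ext ⟨j, t⟩
  simp [eq_comm]

theorem ncard_cell (σ : Fin k → Fin 3) : (cell k σ).ncard = 2 * k := by
  have hgraph : (Set.range fun j => (j, σ j)).ncard = k := by
    rw [Set.ncard_range_of_injective fun j j' h => (Prod.ext_iff.1 h).1, Nat.card_eq_fintype_card,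
      Fintype.card_fin]
  rw [cell, Set.ncard_image_of_injective _ vertex_injective, setOf_ne_eq_compl_range,
    Set.ncard_compl, hgraph, Nat.card_eq_fintype_card, Fintype.card_prod, Fintype.card_fin,
    Fintype.card_fin]
  omega

theorem vertex_notMem_cell (σ : Fin k → Fin 3) (j : Fin k) : vertex k (j, σ j) ∉ cell k σ := by
  rintro ⟨p, hp, hpj⟩
  obtain rfl := vertex_injective hpj
  exact hp rfl

theorem triple_subset_iff {S : Set (V k)} (j : Fin k) :
    ({vA k j, vB k j, vC k j} : Set (V k)) ⊆ S ↔ ∀ t, vertex k (j, t) ∈ S := by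
  simp [Set.insert_subset_iff, Fin.forall_fin_succ]

theorem isGood_cell {σ : Fin k → Fin 3} (hσ : σ ≠ fun _ => 1) : IsGood k (cell k σ) := by
  refine ⟨?_, ncard_cell σ, fun j h => vertex_notMem_cell σ j ((triple_subset_iff j).1 h _), ?_⟩
  · rw [setX_eq_range_vertex]
    exact Set.image_subset_range _ _
  · rw [← cell_const_one]
    exact cell_injective.ne hσ

theorem exists_cell_eq_of_isGood {S : Set (V k)} (hS : IsGood k S) : ∃ σ, cell k σ = S := by
  obtain ⟨hSX, hcard, htriple, -⟩ := hS
  rw [setX_eq_range_vertex] at hSX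
  set T := vertex k ⁻¹' S
  have hST : vertex k '' T = S := Set.image_preimage_eq_of_subset hSX
  have hT : T.ncard = 2 * k := by
    rw [← hcard, ← hST, Set.ncard_image_of_injective _ vertex_injective]
  have hU : Tᶜ.ncard ≤ Nat.card (Fin k) := by
    rw [Set.ncard_compl, hT]
    simp only [Nat.card_eq_fintype_card, Fintype.card_prod, Fintype.card_fin]
    omega
  have hfib : ∀ j, ∃ t, (j, t) ∈ Tᶜ := by
    intro j
    by_contra h
    simp only [not_exists, Set.mem_compl_iff, not_not] at h
    exact htriple j ((triple_subset_iff j).2 h)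
  obtain ⟨σ, hσ⟩ := exists_eq_range_graph hU hfib
  refine ⟨σ, ?_⟩
  rw [cell, setOf_ne_eq_compl_range, ← hσ, compl_compl, hST]

theorem goodSets_eq_image_cell :
    {S : Set (V k) | IsGood k S ∧ S ≠ setA k ∪ setB k ∧ S ≠ setB k ∪ setC k} =
      cell k '' {σ | ∀ t, σ ≠ fun _ => t} := by
  ext S
  constructor
  · rintro ⟨hS, hAB, hBC⟩
    obtain ⟨σ, rfl⟩ := exists_cell_eq_of_isGood hS
    refine ⟨σ, fun t ht => ?_, rfl⟩
    subst ht
    fin_cases t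
    exacts [hBC cell_const_zero, hS.2.2.2 cell_const_one, hAB cell_const_two]
  · rintro ⟨σ, hσ, rfl⟩
    refine ⟨isGood_cell (hσ 1), ?_, ?_⟩
    · rw [← cell_const_two]
      exact cell_injective.ne (hσ 2)
    · rw [← cell_const_zero]
      exact cell_injective.ne (hσ 0)

def bary (k : ℕ) (w : Fin k × Fin 3 → ℝ) : V k := ∑ p, w p • vertex k p

def bShare (k : ℕ) (b : Fin k → ℝ) (i : Fin k) : ℝ := (2 * ∑ j, b j - b i) / (2 * (2 * k - 1))

theorem bShare_mul_eq (b : Fin k → ℝ) (i : Fin k) :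
    (2 * k - 1) * bShare k b i = ∑ j, b j - b i / 2 := by
  have := two_mul_sub_one_ne_zero k
  rw [bShare]
  field_simp

theorem sum_bShare (b : Fin k → ℝ) : ∑ i, bShare k b i = (∑ j, b j) / 2 := by
  have := two_mul_sub_one_ne_zero k
  simp only [bShare, ← Finset.sum_div, Finset.sum_sub_distrib, Finset.sum_const, Finset.card_univ,
    Fintype.card_fin, nsmul_eq_mul]
  rw [div_eq_div_iff (mul_ne_zero two_ne_zero this) two_ne_zero]
  ring

theorem sum_mul_vB_coord (b : Fin k → ℝ) (i : Fin k) :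
    ∑ j, b j * ((2 - if i = j then 1 else 0) / (2 * (2 * k - 1))) = bShare k b i := by
  simp_rw [bShare, ← mul_div_assoc, ← Finset.sum_div]
  congr 1
  simp [mul_sub, Finset.sum_sub_distrib, Finset.sum_mul, mul_comm]

theorem bary_inl (w : Fin k × Fin 3 → ℝ) (i : Fin k) :
    bary k w (.inl i) = w (i, 0) + bShare k (fun j => w (j, 1)) i := by
  simp [bary, Fintype.sum_prod_type, Fin.sum_univ_three, Finset.sum_add_distrib,
    sum_mul_vB_coord, add_comm]

theorem bary_inr (w : Fin k × Fin 3 → ℝ) (i : Fin k) :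
    bary k w (.inr i) = w (i, 2) + bShare k (fun j => w (j, 1)) i := by
  simp [bary, Fintype.sum_prod_type, Fin.sum_univ_three, Finset.sum_add_distrib,
    sum_mul_vB_coord, add_comm]

theorem sum_bary (w : Fin k × Fin 3 → ℝ) : ∑ i, bary k w i = ∑ p, w p := by
  simp only [bary, Finset.sum_apply, Pi.smul_apply, smul_eq_mul]
  rw [Finset.sum_comm]
  simp [← Finset.mul_sum, (vertex_mem_stdSimplex _).2]

theorem smul_bary_add_smul_bary (a b : ℝ) (w w' : Fin k × Fin 3 → ℝ) :
    a • bary k w + b • bary k w' = bary k (a • w + b • w') := by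
  simp [bary, Finset.smul_sum, Finset.sum_add_distrib, add_smul, smul_smul]

theorem mem_convexHull_cell_iff {σ : Fin k → Fin 3} {x : V k} :
    x ∈ convexHull ℝ (cell k σ) ↔ ∃ w : Fin k × Fin 3 → ℝ, (∀ p, 0 ≤ w p) ∧
      (∀ j, w (j, σ j) = 0) ∧ ∑ p, w p = 1 ∧ bary k w = x := by
  simp [cell, mem_convexHull_image_iff, bary]

theorem convexHull_cell_subset_Delta0 (σ : Fin k → Fin 3) : convexHull ℝ (cell k σ) ⊆ Delta0 k := by
  rw [Delta0_eq_stdSimplex]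
  exact convexHull_min (Set.image_subset_iff.2 fun p _ => vertex_mem_stdSimplex p)
    (convex_stdSimplex ℝ _)

def Dominated (k : ℕ) (u v : Fin k → ℝ) : Prop :=
  ∀ i, v i ≤ u i ∧ (2 * k - 1) * v i ≤ 2 * ∑ j, v j

theorem Dominated.add_smul {u v u' v' : Fin k → ℝ} (h : Dominated k u v) (h' : Dominated k u' v')
    {a b : ℝ} (ha : 0 ≤ a) (hb : 0 ≤ b) : Dominated k (a • u + b • u') (a • v + b • v') := by
  intro i
  obtain ⟨h₁, h₂⟩ := h i
  obtain ⟨h₁', h₂'⟩ := h' i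
  simp only [Pi.add_apply, Pi.smul_apply, smul_eq_mul, Finset.sum_add_distrib, ← Finset.mul_sum]
  constructor <;> nlinarith [mul_le_mul_of_nonneg_left h₂ ha, mul_le_mul_of_nonneg_left h₂' hb]

theorem convex_setOf_dominated (e₁ e₂ : Fin k → Fin k ⊕ Fin k) :
    Convex ℝ {x : V k | Dominated k (x ∘ e₁) (x ∘ e₂)} :=
  fun _ hx _ hy _ _ ha hb _ => hx.add_smul hy ha hb

theorem dominated_zero {u : Fin k → ℝ} (hu : ∀ i, 0 ≤ u i) : Dominated k u 0 := fun i => by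
  simpa using hu i

theorem dominated_vB (j : Fin k) : Dominated k (vB k j ∘ .inr) (vB k j ∘ .inr) := by
  have hn := two_mul_sub_one_pos j
  have hsum : ∑ i, (vB k j ∘ .inr) i = 1 / 2 := by
    simp only [Function.comp_apply, vB_inr, ← Finset.sum_div, sum_two_sub_ite]
    field_simp
  intro i
  refine ⟨le_rfl, ?_⟩
  rw [hsum, Function.comp_apply, vB_inr, mul_div_assoc', div_le_iff₀ (by linarith)]
  split_ifs <;> nlinarith

theorem Delta1_subset : Delta1 k ⊆ {x | Dominated k (x ∘ .inl) (x ∘ .inr)} := by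
  refine convexHull_min ?_ (convex_setOf_dominated _ _)
  rintro _ (⟨j, rfl⟩ | ⟨j, rfl⟩)
  · exact dominated_zero fun i => (vertex_mem_stdSimplex (j, 0)).1 (.inl i)
  · exact dominated_vB j

theorem Delta2_subset : Delta2 k ⊆ {x | Dominated k (x ∘ .inr) (x ∘ .inl)} := by
  refine convexHull_min ?_ (convex_setOf_dominated _ _)
  rintro _ (⟨j, rfl⟩ | ⟨j, rfl⟩)
  · exact dominated_vB j
  · exact dominated_zero fun i => (vertex_mem_stdSimplex (j, 2)).1 (.inr i)

theorem not_dominated_bary {σ : Fin k → Fin 3} (hσ : ∀ t, σ ≠ fun _ => t)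
    {w : Fin k × Fin 3 → ℝ} (hw : ∀ j t, t ≠ σ j → 0 < w (j, t)) (hwσ : ∀ j, w (j, σ j) = 0) :
    ¬ Dominated k (bary k w ∘ .inl) (bary k w ∘ .inr) := by
  -- A column omitting `A_j` has `y_j > x_j`. Otherwise the weight on `C` lives on the columns
  -- omitting `B_j`, fewer than `k` of them, and at its largest entry `(2k - 1) y_i > 2 ∑ y`.
  intro hdom
  by_cases hA : ∃ j, σ j = 0
  · obtain ⟨j, hj⟩ := hA
    have h := (hdom j).1
    have h₀ : w (j, 0) = 0 := hj ▸ hwσ j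
    have h₂ : 0 < w (j, 2) := hw j 2 (by rw [hj]; decide)
    simp only [Function.comp_apply, bary_inl, bary_inr] at h
    linarith
  simp only [not_exists] at hA
  have hcol : ∀ j, σ j ≠ 1 → σ j = 2 := fun j => fin_three_eq_two_of_ne (hA j)
  obtain ⟨j₁, hj₁⟩ : ∃ j, σ j = 1 := by
    by_contra! h
    exact hσ 2 (funext fun j => hcol j (h j))
  obtain ⟨j₂, hj₂⟩ : ∃ j, σ j = 2 := by
    by_contra! h
    exact hσ 1 (funext fun j => by_contra fun h' => h j (hcol j h'))
  obtain ⟨i, hi, hsum⟩ := exists_sum_le_card_sub_one_mul (c := fun j => w (j, 2))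
    ⟨j₁, hw j₁ 2 (by rw [hj₁]; decide)⟩ ⟨j₂, hj₂ ▸ hwσ j₂⟩
  have hb : w (i, 1) = 0 := by
    have : σ i = 1 := by_contra fun h => hi.ne' (hcol i h ▸ hwσ i)
    exact this ▸ hwσ i
  have h := (hdom i).2
  simp only [Function.comp_apply, bary_inr, mul_add, bShare_mul_eq, Finset.sum_add_distrib,
    sum_bShare, hb] at h
  simp only [Fintype.card_fin] at hsum
  nlinarith

theorem bary_rev_comp_inl (w : Fin k × Fin 3 → ℝ) :
    bary k (fun p => w (p.1, p.2.rev)) ∘ .inl = bary k w ∘ .inr := by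
  funext i
  simp only [Function.comp_apply, bary_inl, bary_inr]
  rfl

theorem bary_rev_comp_inr (w : Fin k × Fin 3 → ℝ) :
    bary k (fun p => w (p.1, p.2.rev)) ∘ .inr = bary k w ∘ .inl := by
  funext i
  simp only [Function.comp_apply, bary_inl, bary_inr]
  rfl

theorem bary_notMem_Delta1_union_Delta2 {σ : Fin k → Fin 3} (hσ : ∀ t, σ ≠ fun _ => t)
    {w : Fin k × Fin 3 → ℝ} (hw : ∀ j t, t ≠ σ j → 0 < w (j, t)) (hwσ : ∀ j, w (j, σ j) = 0) :
    bary k w ∉ Delta1 k ∪ Delta2 k := by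
  rintro (h | h)
  · exact not_dominated_bary hσ hw hwσ (Delta1_subset h)
  · -- exchanging the halves swaps `A_j` and `C_j` (labels `t ↦ t.rev`) and fixes `B_j`
    have h' : Dominated k (bary k (fun p => w (p.1, p.2.rev)) ∘ .inl)
        (bary k (fun p => w (p.1, p.2.rev)) ∘ .inr) := by
      rw [bary_rev_comp_inl, bary_rev_comp_inr]
      exact Delta2_subset h
    refine not_dominated_bary (σ := Fin.rev ∘ σ) (w := fun p => w (p.1, p.2.rev))
      (fun t ht => hσ t.rev ?_) (fun j t ht => hw j _ fun h => ht ?_) (fun j => ?_) h'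
    · funext j
      rw [← congrFun ht j]
      simp
    · simp [← h]
    · simpa using hwσ j

theorem convexHull_cell_subset_OmegaB {σ : Fin k → Fin 3} (hσ : ∀ t, σ ≠ fun _ => t) :
    convexHull ℝ (cell k σ) ⊆ OmegaB k := by
  obtain ⟨j₀, -⟩ := Function.ne_iff.1 (hσ 0)
  have hk : (0 : ℝ) < k := by exact_mod_cast j₀.pos
  -- the barycentre of the cell; the open segment from it to any point of the cell avoids `Δ₁ ∪ Δ₂`
  set w₀ : Fin k × Fin 3 → ℝ := fun p => if p.2 = σ p.1 then 0 else 1 / (2 * k)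
  have hcol : ∀ s : Fin 3, ∑ t : Fin 3, (if t = s then 0 else 1 / (2 * k : ℝ)) = 1 / k := by
    intro s
    fin_cases s <;> simp only [Fin.sum_univ_three, Fin.isValue, Fin.reduceFinMk, Fin.zero_eta,
      Fin.mk_one, Fin.reduceEq, ↓reduceIte, zero_add, add_zero] <;> field_simp <;> ring
  have hx₀ : bary k w₀ ∈ convexHull ℝ (cell k σ) := by
    refine mem_convexHull_cell_iff.2 ⟨w₀, fun p => ?_, fun j => by simp [w₀], ?_, rfl⟩
    · simp only [w₀]
      split_ifs <;> positivity
    · simp only [w₀, Fintype.sum_prod_type, hcol]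
      simp only [sum_const, card_univ, Fintype.card_fin, nsmul_eq_mul]
      field_simp
  intro x hx
  obtain ⟨w, hw, hwσ, -, rfl⟩ := mem_convexHull_cell_iff.1 hx
  have hseg : openSegment ℝ (bary k w) (bary k w₀) ⊆ Delta0 k \ (Delta1 k ∪ Delta2 k) := by
    rintro _ ⟨a, b, ha, hb, hab, rfl⟩
    refine ⟨convexHull_cell_subset_Delta0 σ ((convex_convexHull ℝ _) hx hx₀ ha.le hb.le hab), ?_⟩
    rw [smul_bary_add_smul_bary]
    refine bary_notMem_Delta1_union_Delta2 hσ (fun j t ht => ?_) (fun j => by simp [w₀, hwσ])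
    have := hw (j, t)
    simp only [Pi.add_apply, Pi.smul_apply, smul_eq_mul, w₀, if_neg ht]
    positivity
  exact closure_mono hseg (segment_subset_closure_openSegment (left_mem_segment ℝ _ _))

theorem exists_cell_of_mem_Delta0 {x : V k} (hx : x ∈ Delta0 k) :
    ∃ σ, σ ≠ (fun _ => 1) ∧ x ∈ convexHull ℝ (cell k σ) := by
  rw [Delta0_eq_stdSimplex] at hx
  obtain ⟨hx₀, hx₁⟩ := hx
  have : Nonempty (Fin k) := by
    by_contra h
    rw [not_nonempty_iff] at h
    simp at hx₁
  set m : Fin k → ℝ := fun j => min (x (.inl j)) (x (.inr j))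
  obtain ⟨t, ⟨j₀, hj₀⟩, ht⟩ := exists_two_mul_sum_max_sub_eq (m := m) fun j =>
    le_min (hx₀ _) (hx₀ _)
  -- `B_j` carries `2(2k - 1)(t - m_j)⁺`, which adds `min t m_j` to both `x_j` and `y_j`, and
  -- `A_j`, `C_j` take the rest; so the weight of `B_j` vanishes if `t ≤ m_j`, and otherwise that
  -- of `A_j` or of `C_j` does.
  set w : Fin k × Fin 3 → ℝ := fun p => ![x (.inl p.1) - min t (m p.1),
    2 * (2 * k - 1) * max (t - m p.1) 0, x (.inr p.1) - min t (m p.1)] p.2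
  set σ : Fin k → Fin 3 := fun j => if t < m j then 1 else if x (.inr j) ≤ x (.inl j) then 2 else 0
  have hshare : ∀ i, bShare k (fun j => w (j, 1)) i = min t (m i) := by
    intro i
    have := two_mul_sub_one_ne_zero k
    simp only [bShare, w, Matrix.cons_val_one, Matrix.cons_val_zero, ← Finset.mul_sum]
    rw [min_eq_sub_max_sub, div_eq_iff (mul_ne_zero two_ne_zero this)]
    linear_combination (2 * (2 * k - 1 : ℝ)) * ht
  have hbary : bary k w = x := by
    ext (i | i) <;> simp only [bary_inl, bary_inr, hshare] <;> simp [w]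
  refine ⟨σ, fun h => ?_, mem_convexHull_cell_iff.2 ⟨w, ?_, ?_, ?_, hbary⟩⟩
  · have := congrFun h j₀
    simp only [σ] at this
    split_ifs at this with h1 h2
    · linarith
    · exact absurd this (by decide)
    · exact absurd this (by decide)
  · rintro ⟨j, s⟩
    have h1 : min t (m j) ≤ x (.inl j) := (min_le_right _ _).trans (min_le_left _ _)
    have h2 : min t (m j) ≤ x (.inr j) := (min_le_right _ _).trans (min_le_right _ _)
    have h3 := two_mul_sub_one_pos j
    fin_cases s
    · simpa [w] using h1
    · simpa [w] using mul_nonneg (by linarith) (le_max_right (t - m j) 0)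
    · simpa [w] using h2
  · intro j
    simp only [σ]
    split_ifs with h1 h2
    · simp [w, h1.le]
    · have : min t (m j) = x (.inr j) := (min_eq_right (not_lt.1 h1)).trans (min_eq_right h2)
      simp [w, this]
    · have : min t (m j) = x (.inl j) :=
        (min_eq_right (not_lt.1 h1)).trans (min_eq_left (le_of_not_ge h2))
      simp [w, this]
  · rw [← sum_bary, hbary, hx₁]

theorem OmegaB_eq_iUnion_convexHull_cell :
    OmegaB k = ⋃ σ ∈ {σ : Fin k → Fin 3 | ∀ t, σ ≠ fun _ => t}, convexHull ℝ (cell k σ) := by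
  refine subset_antisymm (closure_minimal ?_ ?_)
    (Set.iUnion₂_subset fun σ hσ => convexHull_cell_subset_OmegaB hσ)
  · rintro x ⟨hx₀, hx₁₂⟩
    obtain ⟨σ, hσ, hx⟩ := exists_cell_of_mem_Delta0 hx₀
    refine Set.mem_biUnion (fun t ht => ?_) hx
    subst ht
    obtain rfl | rfl | rfl : t = 0 ∨ t = 1 ∨ t = 2 := by fin_cases t <;> simp
    · exact hx₁₂ (.inr (by rwa [cell_const_zero] at hx))
    · exact hσ rfl
    · exact hx₁₂ (.inl (by rwa [cell_const_two] at hx))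
  · exact (Set.toFinite _).isClosed_biUnion fun σ _ =>
      ((Set.toFinite _).image (vertex k)).isClosed_convexHull (𝕜 := ℝ)

end ModularBlock

/-- `Ω = closure(Δ₀ \ (Δ₁ ∪ Δ₂))` is the union of the good simplices other than
`Δ₁ = ⟨A ∪ B⟩` and `Δ₂ = ⟨B ∪ C⟩`; there are `3^k − 3` of them. -/
theorem stmt_11 (k : ℕ) (hk : 2 ≤ k) :
    (OmegaB k =
      ⋃ S ∈ {S : Set (V k) | IsGood k S ∧ S ≠ setA k ∪ setB k ∧ S ≠ setB k ∪ setC k},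
        convexHull ℝ S) ∧
    {S : Set (V k) | IsGood k S ∧ S ≠ setA k ∪ setB k ∧ S ≠ setB k ∪ setC k}.ncard
      = 3 ^ k - 3 := by
  have : Nonempty (Fin k) := ⟨⟨0, by omega⟩⟩
  rw [ModularBlock.goodSets_eq_image_cell, Set.biUnion_image,
    Set.ncard_image_of_injective _ ModularBlock.cell_injective,
    ModularBlock.ncard_setOf_forall_ne_const]
  exact ⟨ModularBlock.OmegaB_eq_iUnion_convexHull_cell, by simp⟩
end
end

section
/- The points v₁*, …, v_m* are affinely independent; their convex hull Δ_S = convexHull{v₁*, …, v_m*} is contained in Δ = convexHull{v₁, …, v_m}; each v_i* lies on the half-open segment from β_S to v_i (excluding β_S, including v_i); and v_i* = v_i if and only if S_i = 1. In particular the separator [Δ, S] = closure(Δ \ Δ_S) is well defined. -/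
/-!
Each `v_i*` is the point of parameter `S_i` on the segment from the barycentre `β_S` (an interior
point of `Δ` with weights `S_i / Σ S`) to `v_i`, which gives the segment, hull and `S_i = 1`
statements, the last because `β_S ≠ v_i`. For affine independence, a vanishing affine relation
`Σ c_i v_i* = 0`, `Σ c_i = 0` rewrites as an affine relation among the `v_i` with coefficients
`c_i S_i - D S_i / Σ S`, where `D = Σ c_i S_i`; hence all `c_i` equal `D / Σ S`, and `Σ c_i = 0`
forces them to vanish.
-/

noncomputable section

/-- `β_S = (Σ S_i v_i)/(Σ S_i)`. -/
def betaPt {N m : ℕ} (v : Fin m → (Fin N → ℝ)) (w : Fin m → ℝ) : Fin N → ℝ :=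
  (∑ i, w i)⁻¹ • ∑ i, w i • v i

/-- `v_i* = S_i v_i + (1 − S_i) β_S`. -/
def vstar {N m : ℕ} (v : Fin m → (Fin N → ℝ)) (w : Fin m → ℝ) (i : Fin m) :
    Fin N → ℝ :=
  w i • v i + (1 - w i) • betaPt v w

open Finset AffineMap

section CenterMass

variable {k V ι : Type*} [Field k] [AddCommGroup V] [Module k V] [Fintype ι]
  {p : ι → V} {w : ι → k}

theorem Finset.centerMass_univ_eq_sum (w : ι → k) (p : ι → V) :
    univ.centerMass w p = ∑ j, ((∑ i, w i)⁻¹ * w j) • p j := by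
  simp only [centerMass, smul_sum, smul_smul]

theorem AffineIndependent.centerMass_ne [Nontrivial ι] (hp : AffineIndependent k p)
    (hW : ∑ i, w i ≠ 0) (hw : ∀ j, w j ≠ 0) (i : ι) : univ.centerMass w p ≠ p i := by
  classical
  intro h
  obtain ⟨j, hji⟩ := exists_ne i
  have := hp.eq_of_sum_eq_sum (s := univ) (w₁ := fun j ↦ (∑ i, w i)⁻¹ * w j)
    (w₂ := Pi.single i 1) ?_ ?_ j (mem_univ j)
  · simp [hji, hW, hw j] at this
  · rw [← mul_sum, inv_mul_cancel₀ hW]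
    simp
  · rw [← centerMass_univ_eq_sum, h]
    simp [Pi.single_apply]

/-- The condition `Σ w_i / t_i ≠ 0` is sharp: when it fails, the points `t_i p_i + (1 - t_i) b`
lie in a hyperplane. -/
theorem AffineIndependent.smul_add_one_sub_smul_centerMass {t : ι → k}
    (hp : AffineIndependent k p) (hW : ∑ i, w i ≠ 0) (ht : ∀ i, t i ≠ 0)
    (hwt : ∑ i, w i / t i ≠ 0) :
    AffineIndependent k (fun i ↦ t i • p i + (1 - t i) • univ.centerMass w p) := by
  rw [affineIndependent_iff_of_fintype]
  intro c hc hcomb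
  rw [univ.weightedVSub_eq_linear_combination hc] at hcomb
  set D := ∑ j, c j * t j
  have hD : D = ∑ j, D * (∑ i, w i)⁻¹ * w j := by
    rw [← mul_sum, mul_assoc, inv_mul_cancel₀ hW, mul_one]
  have hsum : ∑ j, c j * (1 - t j) = -D := by
    simp only [mul_sub, mul_one, sum_sub_distrib, hc, zero_sub, D]
  have key : ∀ j, c j * t j = D * (∑ i, w i)⁻¹ * w j := by
    refine fun j ↦ hp.eq_of_sum_eq_sum hD ?_ j (mem_univ j)
    simp only [smul_add, smul_smul, sum_add_distrib, ← sum_smul, hsum, neg_smul,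
      ← sub_eq_add_neg, sub_eq_zero] at hcomb
    rw [hcomb, centerMass_univ_eq_sum, smul_sum]
    simp only [smul_smul, mul_assoc]
  have hD0 : D = 0 := by
    have : ∑ j, c j = D * (∑ i, w i)⁻¹ * ∑ j, w j / t j := by
      rw [mul_sum]
      refine sum_congr rfl fun j _ ↦ ?_
      rw [mul_div_assoc', ← key, mul_div_cancel_right₀ _ (ht j)]
    rw [hc, eq_comm] at this
    simpa [hW, hwt] using this
  intro j
  simpa [hD0, ht j] using key j

end CenterMass

theorem vstar_eq_lineMap {N m : ℕ} (v : Fin m → (Fin N → ℝ)) (S : Fin m → ℝ) (i : Fin m) :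
    vstar v S i = lineMap (betaPt v S) (v i) (S i) := by
  rw [lineMap_apply_module, vstar, add_comm]

theorem stmt_13_general (N m : ℕ) (hm : 2 ≤ m)
    (v : Fin m → (Fin N → ℝ)) (hv : AffineIndependent ℝ v)
    (S : Fin m → ℝ) (hS : ∀ i, S i ∈ Set.Ioc (0 : ℝ) 1) :
    AffineIndependent ℝ (vstar v S) ∧
    convexHull ℝ (Set.range (vstar v S)) ⊆ convexHull ℝ (Set.range v) ∧
    (∀ i, ∃ t : ℝ, 0 < t ∧ t ≤ 1 ∧
      vstar v S i = (1 - t) • betaPt v S + t • v i) ∧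
    (∀ i, vstar v S i = v i ↔ S i = 1) := by
  have : Nontrivial (Fin m) := Fin.nontrivial_iff_two_le.mpr hm
  have hS0 : ∀ i, S i ≠ 0 := fun i ↦ (hS i).1.ne'
  have hW : 0 < ∑ i, S i := sum_pos (fun i _ ↦ (hS i).1) univ_nonempty
  have hβ : betaPt v S ∈ convexHull ℝ (Set.range v) :=
    univ.centerMass_mem_convexHull (fun i _ ↦ (hS i).1.le) hW fun i _ ↦ Set.mem_range_self i
  refine ⟨?_, ?_, fun i ↦ ⟨S i, (hS i).1, (hS i).2, add_comm _ _⟩, fun i ↦ ?_⟩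
  · refine hv.smul_add_one_sub_smul_centerMass hW.ne' hS0 ?_
    simp only [div_self (hS0 _), sum_const, card_univ, Fintype.card_fin, nsmul_eq_mul, mul_one]
    positivity
  · refine convexHull_min ?_ (convex_convexHull ℝ _)
    rintro _ ⟨i, rfl⟩
    rw [vstar_eq_lineMap]
    exact (convex_convexHull ℝ _).lineMap_mem hβ (subset_convexHull ℝ _ ⟨i, rfl⟩)
      ⟨(hS i).1.le, (hS i).2⟩
  · rw [vstar_eq_lineMap, lineMap_eq_right_iff]
    exact or_iff_right (hv.centerMass_ne hW.ne' hS0 i)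

/-- The points `v₁*, …, v_m*` are affinely independent; their convex hull `Δ_S` is
contained in `Δ`; each `v_i*` lies on the half-open segment from `β_S` to `v_i`
(excluding `β_S`, including `v_i`); and `v_i* = v_i` iff `S_i = 1`.  In particular the
separator `[Δ, S] = closure(Δ \ Δ_S)` is well defined. -/
theorem stmt_13 (N m : ℕ) (hN : 1 ≤ N) (hm : 2 ≤ m)
    (v : Fin m → (Fin N → ℝ)) (hv : AffineIndependent ℝ v)
    (S : Fin m → ℝ) (hS : ∀ i, S i ∈ Set.Ioc (0 : ℝ) 1) :
    AffineIndependent ℝ (vstar v S) ∧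
    convexHull ℝ (Set.range (vstar v S)) ⊆ convexHull ℝ (Set.range v) ∧
    (∀ i, ∃ t : ℝ, 0 < t ∧ t ≤ 1 ∧
      vstar v S i = (1 - t) • betaPt v S + t • v i) ∧
    (∀ i, vstar v S i = v i ↔ S i = 1) :=
  stmt_13_general N m hm v hv S hS
end
end

section
/- Suppose (S_m) is a sequence of weight functions S_m : {1, …, m₂} → (0, 1] such that S_m(i) → S'(i) ∈ (0, 1] as m → ∞ for each i ≤ m₁, and S_m(i) → 0 for each i > m₁. Then β_{S_m} → β'_{S'}; v_i*(S_m) → v_i*(S') for every i ≤ m₁; and v_i*(S_m) → β'_{S'} for every i > m₁. That is, the weighted simplex Δ_{S_m} converges barycentrically to Δ'_{S'}: its first m₁ vertices converge to the vertices of Δ'_{S'} and its remaining vertices converge to the barycenter of Δ'_{S'}. -/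
/-! The limit weights are `S'` extended by zero. The barycenter and the starred vertices
depend continuously on the weights wherever the total weight is nonzero, and at the
zero-extended weights they are the face's `β'_{S'}` and `v_i*(S')`; a vertex of zero weight
is sent to the barycenter. -/

noncomputable section

open Filter Topology

section
variable {N m k : ℕ}

theorem continuousAt_betaPt (v : Fin m → Fin N → ℝ) {w : Fin m → ℝ} (hw : ∑ i, w i ≠ 0) :
    ContinuousAt (betaPt v) w := by
  have hsum : Continuous fun w : Fin m → ℝ => ∑ i, w i :=
    continuous_finsetSum _ fun i _ => continuous_apply i
  have hsum_smul : Continuous fun w : Fin m → ℝ => ∑ i, w i • v i :=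
    continuous_finsetSum _ fun i _ => (continuous_apply i).smul continuous_const
  exact (hsum.continuousAt.inv₀ hw).smul hsum_smul.continuousAt

theorem continuousAt_vstar (v : Fin m → Fin N → ℝ) {w : Fin m → ℝ} (hw : ∑ i, w i ≠ 0)
    (i : Fin m) : ContinuousAt (fun w => vstar v w i) w := by
  have hwi : Continuous fun w : Fin m → ℝ => w i := continuous_apply i
  exact (hwi.smul continuous_const).continuousAt.add
    ((continuous_const.sub hwi).continuousAt.smul (continuousAt_betaPt v hw))

theorem betaPt_append_zero (v : Fin (m + k) → Fin N → ℝ) (w : Fin m → ℝ) :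
    betaPt v (Fin.append w 0) = betaPt (v ∘ Fin.castAdd k) w := by
  simp [betaPt, Fin.sum_univ_add]

theorem vstar_append_zero_castAdd (v : Fin (m + k) → Fin N → ℝ) (w : Fin m → ℝ) (i : Fin m) :
    vstar v (Fin.append w 0) (Fin.castAdd k i) = vstar (v ∘ Fin.castAdd k) w i := by
  simp [vstar, betaPt_append_zero]

theorem vstar_append_zero_of_le (v : Fin (m + k) → Fin N → ℝ) (w : Fin m → ℝ)
    {i : Fin (m + k)} (hi : m ≤ i) :
    vstar v (Fin.append w 0) i = betaPt (v ∘ Fin.castAdd k) w := by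
  induction i using Fin.addCases with
  | left j => exact absurd hi (by simp)
  | right j => simp [vstar, betaPt_append_zero]
end

theorem stmt_15_general (N m₁ m₂ : ℕ) (hm₁ : 2 ≤ m₁) (hlt : m₁ < m₂)
    (v : Fin m₂ → (Fin N → ℝ))
    (S : ℕ → Fin m₂ → ℝ)
    (S' : Fin m₁ → ℝ) (hS' : ∀ i, S' i ∈ Set.Ioc (0 : ℝ) 1)
    (hpos : ∀ i : Fin m₁,
      Tendsto (fun m => S m (Fin.castLE hlt.le i)) atTop (nhds (S' i)))
    (hzero : ∀ i : Fin m₂, m₁ ≤ (i : ℕ) →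
      Tendsto (fun m => S m i) atTop (nhds 0)) :
    Tendsto (fun m => betaPt v (S m)) atTop
        (nhds (betaPt (fun i : Fin m₁ => v (Fin.castLE hlt.le i)) S')) ∧
    (∀ i : Fin m₁,
      Tendsto (fun m => vstar v (S m) (Fin.castLE hlt.le i)) atTop
        (nhds (vstar (fun i : Fin m₁ => v (Fin.castLE hlt.le i)) S' i))) ∧
    (∀ i : Fin m₂, m₁ ≤ (i : ℕ) →
      Tendsto (fun m => vstar v (S m) i) atTop
        (nhds (betaPt (fun i : Fin m₁ => v (Fin.castLE hlt.le i)) S'))) := by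
  obtain ⟨k, rfl⟩ : ∃ k, m₂ = m₁ + k := ⟨m₂ - m₁, by omega⟩
  have hS : Tendsto S atTop (𝓝 (Fin.append S' 0)) := by
    refine tendsto_pi_nhds.2 fun i => Fin.addCases (fun j => ?_) (fun j => ?_) i
    · rw [Fin.append_left]
      exact hpos j
    · simpa using hzero (Fin.natAdd m₁ j) (by simp)
  have hsum : ∑ i, Fin.append S' (0 : Fin k → ℝ) i ≠ 0 := by
    have : Nonempty (Fin m₁) := ⟨⟨0, by omega⟩⟩
    rw [Fin.sum_univ_add]
    simpa using (Finset.sum_pos (fun i _ => (hS' i).1) Finset.univ_nonempty).ne'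
  refine ⟨?_, fun i => ?_, fun i hi => ?_⟩
  · exact betaPt_append_zero v S' ▸ (continuousAt_betaPt v hsum).tendsto.comp hS
  · exact vstar_append_zero_castAdd v S' i ▸ (continuousAt_vstar v hsum _).tendsto.comp hS
  · exact vstar_append_zero_of_le v S' hi ▸ (continuousAt_vstar v hsum i).tendsto.comp hS

/-- If the weights `S_m(i)` converge to `S'(i) ∈ (0,1]` for `i ≤ m₁` and to `0` for
`i > m₁`, then the weighted simplex `Δ_{S_m}` converges barycentrically to `Δ'_{S'}`:
`β_{S_m} → β'_{S'}`, the first `m₁` starred vertices converge to the starred vertices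
of the face, and the remaining starred vertices converge to `β'_{S'}`. -/
theorem stmt_15 (N m₁ m₂ : ℕ) (hN : 1 ≤ N) (hm₁ : 2 ≤ m₁) (hlt : m₁ < m₂)
    (v : Fin m₂ → (Fin N → ℝ)) (hv : AffineIndependent ℝ v)
    (S : ℕ → Fin m₂ → ℝ) (hS : ∀ m i, S m i ∈ Set.Ioc (0 : ℝ) 1)
    (S' : Fin m₁ → ℝ) (hS' : ∀ i, S' i ∈ Set.Ioc (0 : ℝ) 1)
    (hpos : ∀ i : Fin m₁,
      Tendsto (fun m => S m (Fin.castLE hlt.le i)) atTop (nhds (S' i)))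
    (hzero : ∀ i : Fin m₂, m₁ ≤ (i : ℕ) →
      Tendsto (fun m => S m i) atTop (nhds 0)) :
    Tendsto (fun m => betaPt v (S m)) atTop
        (nhds (betaPt (fun i : Fin m₁ => v (Fin.castLE hlt.le i)) S')) ∧
    (∀ i : Fin m₁,
      Tendsto (fun m => vstar v (S m) (Fin.castLE hlt.le i)) atTop
        (nhds (vstar (fun i : Fin m₁ => v (Fin.castLE hlt.le i)) S' i))) ∧
    (∀ i : Fin m₂, m₁ ≤ (i : ℕ) →
      Tendsto (fun m => vstar v (S m) i) atTop
        (nhds (betaPt (fun i : Fin m₁ => v (Fin.castLE hlt.le i)) S'))) :=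
  stmt_15_general N m₁ m₂ hm₁ hlt v S S' hS' hpos hzero
end
end

section
/- Let A = [[a, b], [c, d]] and A' = [[a', b'], [c', d']] be matrices with integer entries, determinant 1, |a + d| > 2, and |a' + d'| > 2. If some real number x satisfies both c·x² + (d − a)·x − b = 0 and c'·x² + (d' − a')·x − b' = 0, then the two quadratics have exactly the same real roots: every real y with c·y² + (d − a)·y − b = 0 also satisfies c'·y² + (d' − a')·y − b' = 0, and conversely. (This is the concrete content of Lemma 3.2(2): two hyperbolic elements of the modular group whose axes share one endpoint on the circle at infinity must share both endpoints, so two distinct geodesics of a modular pattern cannot share an endpoint.) -/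
/-!
Completing the square turns a root `x` of `c x² + (d - a) x - b` into the identity
`(2 c x + d - a)² = (a + d)² - 4`, and for `|a + d| > 2` the right-hand side lies strictly
between `(|a + d| - 1)²` and `(a + d)²`, so it is not a square: hyperbolic fixed points are
irrational.  If two such quadratics share a root `x`, the combination `c' P - c P'` is a
linear polynomial with integer coefficients vanishing at the irrational `x`, hence it is
identically zero; since `c, c' ≠ 0`, the two quadratics are proportional.
-/

section FixedPointQuadratic

variable {K : Type*}

def fixedPointQuadratic [Ring K] (a b c d : ℤ) (x : K) : K :=
  (c : K) * x ^ 2 + ((d : K) - (a : K)) * x - (b : K)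

variable (a b c d : ℤ)

lemma ratCast_fixedPointQuadratic [DivisionRing K] [CharZero K] (q : ℚ) :
    ((fixedPointQuadratic a b c d q : ℚ) : K) = fixedPointQuadratic a b c d (q : K) := by
  simp [fixedPointQuadratic]

lemma sq_two_mul_add_sub_of_fixedPointQuadratic_eq_zero [CommRing K] {x : K}
    (hx : fixedPointQuadratic a b c d x = 0) :
    (2 * c * x + (d - a)) ^ 2 = (((a + d) ^ 2 - 4 * (a * d - b * c) : ℤ) : K) := by
  unfold fixedPointQuadratic at hx
  push_cast
  linear_combination 4 * (c : K) * hx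

lemma Int.not_isSquare_sq_sub_four {t : ℤ} (ht : 2 < |t|) : ¬IsSquare (t ^ 2 - 4) := by
  rintro ⟨p, hp⟩
  have hlt : |p| < |t| := by nlinarith [sq_abs p, sq_abs t, abs_nonneg p]
  have hle : |p| + 1 ≤ |t| := hlt
  nlinarith [sq_abs p, sq_abs t, abs_nonneg p]

variable {a b c d}

lemma fixedPointQuadratic_rat_ne_zero (hdet : a * d - b * c = 1) (htr : 2 < |a + d|) (q : ℚ) :
    fixedPointQuadratic a b c d q ≠ 0 := by
  intro hq
  have hsq := sq_two_mul_add_sub_of_fixedPointQuadratic_eq_zero a b c d hq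
  rw [hdet, mul_one] at hsq
  exact Int.not_isSquare_sq_sub_four htr
    (Rat.isSquare_intCast_iff.mp ⟨_, hsq.symm.trans (sq _)⟩)

lemma lowerLeft_ne_zero_of_two_lt_abs_trace (hdet : a * d - b * c = 1) (htr : 2 < |a + d|) :
    c ≠ 0 := by
  rintro rfl
  rcases Int.mul_eq_one_iff_eq_one_or_neg_one.mp (by linarith : a * d = 1) with
    ⟨rfl, rfl⟩ | ⟨rfl, rfl⟩ <;> norm_num at htr

lemma mul_fixedPointQuadratic_eq_of_common_root [Field K] [CharZero K] {a' b' c' d' : ℤ}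
    (hirr : ∀ q : ℚ, fixedPointQuadratic a b c d q ≠ 0) {x : K}
    (hx : fixedPointQuadratic a b c d x = 0) (hx' : fixedPointQuadratic a' b' c' d' x = 0)
    (y : K) :
    c' * fixedPointQuadratic a b c d y = c * fixedPointQuadratic a' b' c' d' y := by
  set α : ℤ := c' * (d - a) - c * (d' - a')
  set β : ℤ := c' * b - c * b'
  have hlin : ∀ z : K, c' * fixedPointQuadratic a b c d z - c * fixedPointQuadratic a' b' c' d' z
      = α * z - β := by
    intro z
    simp only [fixedPointQuadratic, α, β]
    push_cast
    ring
  have hαx : (α : K) * x = β := by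
    linear_combination -(hlin x) + (c' : K) * hx - (c : K) * hx'
  have hα : α = 0 := by
    by_contra hα
    have hαne : (α : K) ≠ 0 := Int.cast_ne_zero.mpr hα
    apply hirr (β / α)
    apply Rat.cast_injective (α := K)
    rw [ratCast_fixedPointQuadratic, Rat.cast_zero, ← hx]
    push_cast
    rw [← hαx, mul_div_cancel_left₀ _ hαne]
  have hαK : (α : K) = 0 := by rw [hα, Int.cast_zero]
  have hβK : (β : K) = 0 := by rw [← hαx, hαK, zero_mul]
  linear_combination hlin y + y * hαK - hβK

end FixedPointQuadratic

/-- Let `A = [[a, b], [c, d]]` and `A' = [[a', b'], [c', d']]` be integer matrices of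
determinant 1 with `|a + d| > 2` and `|a' + d'| > 2`.  If the fixed-point quadratics
`c·x² + (d − a)·x − b` and `c'·x² + (d' − a')·x − b'` share a real root, then they have
exactly the same real roots: two hyperbolic elements of the modular group whose axes
share one endpoint at infinity share both endpoints. -/
theorem stmt_19 (a b c d a' b' c' d' : ℤ)
    (hdet : a * d - b * c = 1) (hdet' : a' * d' - b' * c' = 1)
    (htr : 2 < |a + d|) (htr' : 2 < |a' + d'|)
    (x : ℝ)
    (hx : (c : ℝ) * x ^ 2 + ((d : ℝ) - (a : ℝ)) * x - (b : ℝ) = 0)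
    (hx' : (c' : ℝ) * x ^ 2 + ((d' : ℝ) - (a' : ℝ)) * x - (b' : ℝ) = 0) :
    ∀ y : ℝ,
      (c : ℝ) * y ^ 2 + ((d : ℝ) - (a : ℝ)) * y - (b : ℝ) = 0 ↔
      (c' : ℝ) * y ^ 2 + ((d' : ℝ) - (a' : ℝ)) * y - (b' : ℝ) = 0 := by
  intro y
  have hc : (c : ℝ) ≠ 0 := Int.cast_ne_zero.mpr (lowerLeft_ne_zero_of_two_lt_abs_trace hdet htr)
  have hc' : (c' : ℝ) ≠ 0 :=
    Int.cast_ne_zero.mpr (lowerLeft_ne_zero_of_two_lt_abs_trace hdet' htr')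
  have key := mul_fixedPointQuadratic_eq_of_common_root
    (fixedPointQuadratic_rat_ne_zero hdet htr) hx hx' y
  change fixedPointQuadratic a b c d y = 0 ↔ fixedPointQuadratic a' b' c' d' y = 0
  constructor
  · intro h
    rw [h, mul_zero, eq_comm, mul_eq_zero] at key
    exact key.resolve_left hc
  · intro h
    rw [h, mul_zero, mul_eq_zero] at key
    exact key.resolve_left hc'
end
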